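/- arXiv:2601.11439 — 9 statements merged into one kernel-verified Lean document; each statement's English description precedes it below -/
import Mathlib

section
/- Let n ≥ 1, p ≥ 1 and let M ∈ ℂ^{np×np} be a block matrix with blocks M_ij ∈ ℂ^{p×p} for i, j ∈ {1,…,n}, such that each diagonal block M_ii is Hermitian. Then for every eigenvalue λ ∈ ℂ of M there exists an index i such that Re(λ) ≥ λ_min(M_ii) − Σ_{j≠i} ‖M_ij‖, where λ_min(M_ii) denotes the smallest eigenvalue of the Hermitian matrix M_ii and ‖·‖ denotes the spectral (ℓ²-operator) norm. -/
/-!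
Split an eigenvector into blocks `u j` and pick a block `u i` of largest norm. Pairing the `i`-th
block row of `M v = λ v` with `u i` gives `Re λ ‖u i‖² = Σ_j Re ⟪u i, M_ij u j⟫`. The diagonal term
is at least `λ_min(M_ii) ‖u i‖²` by the spectral theorem, and each off-diagonal term is at least
`-‖M_ij‖ ‖u i‖ ‖u j‖ ≥ -‖M_ij‖ ‖u i‖²` by Cauchy–Schwarz and maximality of `‖u i‖`.
-/

open RCLike Finset
open scoped InnerProductSpace Matrix

section Rayleigh

variable {𝕜 E ι : Type*} [RCLike 𝕜] [NormedAddCommGroup E] [InnerProductSpace 𝕜 E] [Fintype ι]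

lemma OrthonormalBasis.re_inner_apply_self_eq_sum (b : OrthonormalBasis ι 𝕜 E) {T : E →ₗ[𝕜] E}
    (hT : T.IsSymmetric) {μ : ι → ℝ} (hb : ∀ k, T (b k) = (μ k : 𝕜) • b k) (x : E) :
    re ⟪x, T x⟫_𝕜 = ∑ k, μ k * ‖⟪b k, x⟫_𝕜‖ ^ 2 := by
  rw [← b.sum_inner_mul_inner x (T x), map_sum]
  refine sum_congr rfl fun k _ => ?_
  rw [← hT, hb, inner_smul_left, conj_ofReal, mul_left_comm, re_ofReal_mul,
    inner_mul_symm_re_eq_norm, norm_mul, ← inner_conj_symm x, norm_conj, sq]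

lemma OrthonormalBasis.iInf_mul_norm_sq_le_re_inner (b : OrthonormalBasis ι 𝕜 E)
    {T : E →ₗ[𝕜] E} (hT : T.IsSymmetric) {μ : ι → ℝ} (hb : ∀ k, T (b k) = (μ k : 𝕜) • b k)
    (x : E) : (⨅ k, μ k) * ‖x‖ ^ 2 ≤ re ⟪x, T x⟫_𝕜 := by
  rw [b.re_inner_apply_self_eq_sum hT hb, ← b.sum_sq_norm_inner_right, mul_sum]
  gcongr with k
  exact ciInf_le (Finite.bddBelow_range μ) k

end Rayleigh

lemma Matrix.IsHermitian.iInf_eigenvalues_mul_norm_sq_le {𝕜 n : Type*} [RCLike 𝕜] [Fintype n]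
    [DecidableEq n] {A : Matrix n n 𝕜} (hA : A.IsHermitian) (x : EuclideanSpace 𝕜 n) :
    (⨅ k, hA.eigenvalues k) * ‖x‖ ^ 2 ≤ re ⟪x, Matrix.toEuclideanCLM (𝕜 := 𝕜) A x⟫_𝕜 := by
  refine hA.eigenvectorBasis.iInf_mul_norm_sq_le_re_inner
    (T := Matrix.toEuclideanCLM (𝕜 := 𝕜) A) (Matrix.isSymmetric_toEuclideanLin_iff.mpr hA)
    (fun k => ?_) x
  apply WithLp.ofLp_injective
  rw [WithLp.ofLp_smul, ← RCLike.real_smul_eq_coe_smul]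
  exact hA.mulVec_eigenvectorBasis k

section BlockOperator

variable {𝕜 E ι : Type*} [RCLike 𝕜] [NormedAddCommGroup E] [InnerProductSpace 𝕜 E] [Fintype ι]

lemma neg_opNorm_mul_sq_le_re_inner (T : E →L[𝕜] E) {x y : E} (hy : ‖y‖ ≤ ‖x‖) :
    -(‖T‖ * ‖x‖ ^ 2) ≤ re ⟪x, T y⟫_𝕜 := by
  have hnorm : ‖⟪x, T y⟫_𝕜‖ ≤ ‖T‖ * ‖x‖ ^ 2 := calc
    ‖⟪x, T y⟫_𝕜‖ ≤ ‖x‖ * (‖T‖ * ‖y‖) := by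
      grw [norm_inner_le_norm, T.le_opNorm y]
    _ ≤ ‖x‖ * (‖T‖ * ‖x‖) := by gcongr
    _ = ‖T‖ * ‖x‖ ^ 2 := by ring
  linarith [neg_abs_le (re ⟪x, T y⟫_𝕜), abs_re_le_norm ⟪x, T y⟫_𝕜]

lemma sub_sum_opNorm_le_re_of_sum_apply_eq_smul [DecidableEq ι] (T : ι → ι → E →L[𝕜] E)
    {u : ι → E} {lam : 𝕜} {i : ι} (heig : ∑ j, T i j (u j) = lam • u i)
    (hmax : ∀ j, ‖u j‖ ≤ ‖u i‖) (hu : u i ≠ 0) {c : ℝ}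
    (hc : c * ‖u i‖ ^ 2 ≤ re ⟪u i, T i i (u i)⟫_𝕜) :
    c - ∑ j ∈ univ.erase i, ‖T i j‖ ≤ re lam := by
  have hre : re lam * ‖u i‖ ^ 2 = ∑ j, re ⟪u i, T i j (u j)⟫_𝕜 := by
    rw [← map_sum, ← inner_sum, heig, inner_smul_right, inner_self_eq_norm_sq_to_K,
      ← ofReal_pow, re_mul_ofReal]
  have hoff : -∑ j ∈ univ.erase i, ‖T i j‖ * ‖u i‖ ^ 2 ≤
      ∑ j ∈ univ.erase i, re ⟪u i, T i j (u j)⟫_𝕜 := by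
    rw [← sum_neg_distrib]
    exact sum_le_sum fun j _ => neg_opNorm_mul_sq_le_re_inner _ (hmax j)
  rw [← add_sum_erase _ _ (mem_univ i)] at hre
  have hmul : (c - ∑ j ∈ univ.erase i, ‖T i j‖) * ‖u i‖ ^ 2 ≤ re lam * ‖u i‖ ^ 2 := by
    rw [sub_mul, sum_mul]
    linarith
  exact le_of_mul_le_mul_right hmul (by positivity)

end BlockOperator

lemma Matrix.mulVec_of_blocks_apply {ι κ R : Type*} [Fintype ι] [Fintype κ]
    [NonUnitalNonAssocSemiring R] (M : ι → ι → Matrix κ κ R) (v : ι × κ → R) (i : ι) (k : κ) :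
    ((Matrix.of fun a b : ι × κ => M a.1 b.1 a.2 b.2) *ᵥ v) (i, k) =
      ∑ j, (M i j *ᵥ fun l => v (j, l)) k := by
  simp only [Matrix.mulVec, dotProduct, Matrix.of_apply, Fintype.sum_prod_type]

lemma Matrix.sum_toEuclideanCLM_blocks_eq_smul {𝕜 ι κ : Type*} [RCLike 𝕜] [Fintype ι]
    [Fintype κ] [DecidableEq κ] (M : ι → ι → Matrix κ κ 𝕜) {v : ι × κ → 𝕜} {lam : 𝕜}
    (heig : (Matrix.of fun a b : ι × κ => M a.1 b.1 a.2 b.2) *ᵥ v = lam • v) (i : ι) :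
    ∑ j, Matrix.toEuclideanCLM (𝕜 := 𝕜) (M i j) (WithLp.toLp 2 fun l => v (j, l)) =
      lam • WithLp.toLp 2 fun l => v (i, l) := by
  ext k
  have := congrFun heig (i, k)
  rw [Matrix.mulVec_of_blocks_apply] at this
  simpa only [PiLp.smul_apply, WithLp.ofLp_sum, Finset.sum_apply, Matrix.ofLp_toEuclideanCLM,
    Pi.smul_apply] using this

theorem stmt_5_general (n p : ℕ)
    (M : Fin n → Fin n → Matrix (Fin p) (Fin p) ℂ)
    (hherm : ∀ i, (M i i).IsHermitian)
    (lam : ℂ) (v : Fin n × Fin p → ℂ) (hv : v ≠ 0)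
    (heig : (Matrix.of fun a b : Fin n × Fin p => M a.1 b.1 a.2 b.2).mulVec v = lam • v) :
    ∃ i, (⨅ k, (hherm i).eigenvalues k) -
        ∑ j ∈ Finset.univ.erase i, ‖Matrix.toEuclideanCLM (𝕜 := ℂ) (M i j)‖ ≤ lam.re := by
  set u : Fin n → EuclideanSpace ℂ (Fin p) := fun j => WithLp.toLp 2 fun l => v (j, l)
  obtain ⟨⟨j₀, l₀⟩, hj₀⟩ := Function.ne_iff.mp hv
  have : Nonempty (Fin n) := ⟨j₀⟩
  obtain ⟨i, hmax⟩ := Finite.exists_max fun j => ‖u j‖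
  have hu₀ : u j₀ ≠ 0 := fun h => hj₀ (congrArg (fun w => w l₀) h)
  have hu : u i ≠ 0 := norm_pos_iff.mp ((norm_pos_iff.mpr hu₀).trans_le (hmax j₀))
  exact ⟨i, sub_sum_opNorm_le_re_of_sum_apply_eq_smul
    (fun i j => Matrix.toEuclideanCLM (𝕜 := ℂ) (M i j))
    (Matrix.sum_toEuclideanCLM_blocks_eq_smul M heig i) hmax hu
    ((hherm i).iInf_eigenvalues_mul_norm_sq_le (u i))⟩

/-- block Gershgorin theorem. For a block matrix `M` (blocks of size `p × p`)
with Hermitian diagonal blocks, every eigenvalue `λ` of `M` satisfies, for some block row `i`,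
`Re λ ≥ λ_min(M i i) − Σ_{j ≠ i} ‖M i j‖`, where `‖·‖` is the spectral norm. -/
theorem stmt_5 (n p : ℕ) (hn : 1 ≤ n) (hp : 1 ≤ p)
    (M : Fin n → Fin n → Matrix (Fin p) (Fin p) ℂ)
    (hherm : ∀ i, (M i i).IsHermitian)
    (lam : ℂ) (v : Fin n × Fin p → ℂ) (hv : v ≠ 0)
    (heig : (Matrix.of fun a b : Fin n × Fin p => M a.1 b.1 a.2 b.2).mulVec v = lam • v) :
    ∃ i, (⨅ k, (hherm i).eigenvalues k) -
        ∑ j ∈ Finset.univ.erase i, ‖Matrix.toEuclideanCLM (𝕜 := ℂ) (M i j)‖ ≤ lam.re :=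
  stmt_5_general n p M hherm lam v hv heig
end

section
/- Let d ≥ 2, let G = (V,E) be a strongly connected directed graph on vertices {1,…,n}, and let A = [a_ij] be a weight matrix for G satisfying a_ii > √2 · Σ_{j≠i} a_ij for every i. Let x = (x_1,…,x_n) be any configuration of unit vectors in ℝ^d and set y = f_A(x) with components y_i. Then for every choice of real d×(d−1) matrices R_1,…,R_n and S_1,…,S_n with orthonormal columns satisfying R_i^T x_i = 0 and S_i^T y_i = 0 for all i, the n(d−1)×n(d−1) block matrix whose (i,j) block is a_ij · S_i^T R_j is invertible. (Equivalently, the determinant of the differential of f_A at x, represented in any orthonormal tangent bases, is nonzero at every point.) -/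
/-!
A kernel vector `v` of the block matrix yields tangent vectors `u_j = R_j v_j ⊥ x_j` such that
`∑_j a_ij u_j` is orthogonal to the tangent space at `y_i`, hence a multiple of
`∑_j a_ij x_j`: `∑_j a_ij (u_j - λ x_j) = 0` for some `λ`. At an index `i` where `‖u_i‖` is
maximal, `‖u_j - λ x_j‖² = ‖u_j‖² + λ²` is maximal as well, so diagonal dominance and the
triangle inequality force `u_i - λ x_i = 0`, i.e. `u = 0`.
-/

open Finset Module
open scoped InnerProductSpace Matrix

theorem norm_sub_sum_erase_le_norm_sum {ι E : Type*} [Fintype ι] [DecidableEq ι]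
    [SeminormedAddCommGroup E] (f : ι → E) (i : ι) :
    ‖f i‖ - ∑ j ∈ univ.erase i, ‖f j‖ ≤ ‖∑ j, f j‖ := by
  rw [← add_sum_erase univ f (mem_univ i)]
  have := norm_sum_le (univ.erase i) f
  have := norm_sub_le (f i + ∑ j ∈ univ.erase i, f j) (∑ j ∈ univ.erase i, f j)
  rw [add_sub_cancel_right] at this
  linarith

variable {ι : Type*} [Fintype ι] {E : Type*} [NormedAddCommGroup E] [InnerProductSpace ℝ E]

theorem sum_smul_ne_zero_of_lt_of_norm_le [DecidableEq ι] {a : ι → ℝ} (ha : ∀ j, 0 ≤ a j)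
    {i : ι} (hdom : ∑ j ∈ univ.erase i, a j < a i) {e : ι → E} (hmax : ∀ j, ‖e j‖ ≤ ‖e i‖)
    (hi : e i ≠ 0) : ∑ j, a j • e j ≠ 0 := by
  intro h
  have key := norm_sub_sum_erase_le_norm_sum (fun j => a j • e j) i
  simp only [norm_smul, Real.norm_of_nonneg (ha _), h, norm_zero] at key
  have hle : ∑ j ∈ univ.erase i, a j * ‖e j‖ ≤ (∑ j ∈ univ.erase i, a j) * ‖e i‖ := by
    rw [sum_mul]
    exact sum_le_sum fun j _ => mul_le_mul_of_nonneg_left (hmax j) (ha j)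
  have := norm_pos_iff.mpr hi
  nlinarith

theorem Orthonormal.eq_zero_of_forall_inner_eq_zero [FiniteDimensional ℝ E] {v : ι → E}
    (hv : Orthonormal ℝ v) (hcard : finrank ℝ E ≤ Fintype.card ι) {z : E}
    (hz : ∀ i, ⟪v i, z⟫_ℝ = 0) : z = 0 := by
  have hspan := hv.linearIndependent.span_eq_top_of_card_eq_finrank'
    (le_antisymm hv.linearIndependent.fintype_card_le_finrank hcard)
  let b := Basis.mk hv.linearIndependent hspan.ge
  exact InnerProductSpace.ext_inner_left_basis b fun i => by simp [b, hz i]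

theorem Orthonormal.eq_inner_smul_of_forall_inner_eq_zero [FiniteDimensional ℝ E]
    {S : ι → E} (hS : Orthonormal ℝ S) {y : E} (hy : ‖y‖ = 1) (hSy : ∀ a, ⟪S a, y⟫_ℝ = 0)
    (hcard : finrank ℝ E ≤ Fintype.card ι + 1) {w : E} (hSw : ∀ a, ⟪S a, w⟫_ℝ = 0) :
    w = ⟪y, w⟫_ℝ • y := by
  classical
  have hSy' : Orthonormal ℝ (Sum.elim S fun _ : Unit => y) := by
    rw [orthonormal_iff_ite]
    rintro (a | ⟨⟩) (b | ⟨⟩)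
    · simpa using orthonormal_iff_ite.mp hS a b
    · simp [hSy a]
    · simpa [real_inner_comm] using hSy b
    · simp [hy]
  rw [← sub_eq_zero]
  refine hSy'.eq_zero_of_forall_inner_eq_zero (by simpa using hcard) ?_
  rintro (a | ⟨⟩)
  · simp [inner_sub_right, real_inner_smul_right, hSw a, hSy a]
  · simp [inner_sub_right, real_inner_smul_right, hy]

theorem norm_sub_smul_sq_of_inner_eq_zero {u x : E} (hx : ‖x‖ = 1) (hux : ⟪u, x⟫_ℝ = 0)
    (l : ℝ) : ‖u - l • x‖ ^ 2 = ‖u‖ ^ 2 + l ^ 2 := by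
  rw [norm_sub_sq_real, real_inner_smul_right, hux, norm_smul, Real.norm_eq_abs, hx]
  simp

theorem sum_smul_sub_smul_ne_zero [DecidableEq ι] {x u : ι → E} (hx : ∀ j, ‖x j‖ = 1)
    (hux : ∀ j, ⟪u j, x j⟫_ℝ = 0) {a : ι → ℝ} (ha : ∀ j, 0 ≤ a j) {i : ι}
    (hdom : ∑ j ∈ univ.erase i, a j < a i) (hmax : ∀ j, ‖u j‖ ≤ ‖u i‖) (hi : u i ≠ 0) (l : ℝ) :
    ∑ j, a j • (u j - l • x j) ≠ 0 := by
  refine sum_smul_ne_zero_of_lt_of_norm_le ha hdom (fun j => ?_) ?_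
  · rw [← sq_le_sq₀ (norm_nonneg _) (norm_nonneg _),
      norm_sub_smul_sq_of_inner_eq_zero (hx j) (hux j),
      norm_sub_smul_sq_of_inner_eq_zero (hx i) (hux i)]
    gcongr
    exact hmax j
  · intro h
    have hsq := norm_sub_smul_sq_of_inner_eq_zero (hx i) (hux i) l
    rw [h, norm_zero] at hsq
    have := norm_pos_iff.mpr hi
    nlinarith

theorem mulVec_of_mul_inner_apply {n κ : Type*} [Fintype n] [Fintype κ] (A : Matrix n n ℝ)
    (S R : n → κ → E) (v : n × κ → ℝ) (p : n × κ) :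
    ((Matrix.of fun p q : n × κ => A p.1 q.1 * ⟪S p.1 p.2, R q.1 q.2⟫_ℝ) *ᵥ v) p =
      ⟪S p.1 p.2, ∑ j, A p.1 j • ∑ b, v (j, b) • R j b⟫_ℝ := by
  simp only [Matrix.mulVec, dotProduct, Matrix.of_apply, Fintype.sum_prod_type, inner_sum,
    real_inner_smul_right, mul_sum]
  exact sum_congr rfl fun j _ => sum_congr rfl fun b _ => by ring

theorem exists_forall_norm_le_of_ne_zero {n κ : Type*} [Fintype n] [Fintype κ]
    {R : n → κ → E} (hR : ∀ j, Orthonormal ℝ (R j)) {v : n × κ → ℝ} (hv : v ≠ 0) :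
    ∃ i, ∑ b, v (i, b) • R i b ≠ 0 ∧
      ∀ j, ‖∑ b, v (j, b) • R j b‖ ≤ ‖∑ b, v (i, b) • R i b‖ := by
  obtain ⟨⟨k, c⟩, hkc⟩ := Function.ne_iff.mp hv
  have hk : ∑ b, v (k, b) • R k b ≠ 0 := by
    intro h
    have hc := (hR k).inner_right_fintype (fun b => v (k, b)) c
    rw [h, inner_zero_right] at hc
    exact hkc hc.symm
  obtain ⟨i, -, hmax⟩ := exists_max_image univ (fun j => ‖∑ b, v (j, b) • R j b‖)
    (univ_nonempty_iff.mpr ⟨k⟩)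
  refine ⟨i, fun hi => hk (norm_le_zero_iff.mp ?_), fun j => hmax j (mem_univ j)⟩
  simpa [hi] using hmax k (mem_univ k)

theorem stmt_6_general (n d : ℕ)
    (A : Matrix (Fin n) (Fin n) ℝ)
    (hApos : ∀ i j, 0 ≤ A i j)
    (hdd : ∀ i, Real.sqrt 2 * ∑ j ∈ Finset.univ.erase i, A i j < A i i)
    (x : Fin n → EuclideanSpace ℝ (Fin d)) (hx : ∀ i, ‖x i‖ = 1)
    (R S : Fin n → Fin (d - 1) → EuclideanSpace ℝ (Fin d))
    (hR : ∀ i, Orthonormal ℝ (R i)) (hS : ∀ i, Orthonormal ℝ (S i))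
    (hRx : ∀ i a, ⟪R i a, x i⟫_ℝ = 0)
    (hSy : ∀ i a, ⟪S i a, ‖∑ j, A i j • x j‖⁻¹ • ∑ j, A i j • x j⟫_ℝ = 0) :
    (Matrix.of fun p q : Fin n × Fin (d - 1) =>
        A p.1 q.1 * ⟪S p.1 p.2, R q.1 q.2⟫_ℝ).det ≠ 0 := by
  intro hdet
  obtain ⟨v, hv, hMv⟩ := Matrix.exists_mulVec_eq_zero_iff.mpr hdet
  set u := fun j => ∑ b, v (j, b) • R j b
  obtain ⟨i, hi, hmax⟩ := exists_forall_norm_le_of_ne_zero hR hv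
  have hdom : ∑ j ∈ univ.erase i, A i j < A i i :=
    (le_mul_of_one_le_left (sum_nonneg fun j _ => hApos i j) Real.one_lt_sqrt_two.le).trans_lt
      (hdd i)
  set s := ∑ j, A i j • x j
  have hs : s ≠ 0 := by
    refine sum_smul_ne_zero_of_lt_of_norm_le (hApos i) hdom (fun j => by rw [hx, hx]) ?_
    rw [← norm_ne_zero_iff, hx]
    exact one_ne_zero
  set w := ∑ j, A i j • u j
  have hSw : ∀ a, ⟪S i a, w⟫_ℝ = 0 := fun a =>
    (mulVec_of_mul_inner_apply A S R v (i, a)).symm.trans (congrFun hMv (i, a))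
  have hw : w = ⟪‖s‖⁻¹ • s, w⟫_ℝ • ‖s‖⁻¹ • s := by
    refine (hS i).eq_inner_smul_of_forall_inner_eq_zero (norm_smul_inv_norm hs) (hSy i) ?_ hSw
    simp only [finrank_euclideanSpace_fin, Fintype.card_fin]
    omega
  have hux : ∀ j, ⟪u j, x j⟫_ℝ = 0 := fun j => by
    simp [u, sum_inner, real_inner_smul_left, hRx]
  refine sum_smul_sub_smul_ne_zero hx hux (hApos i) hdom hmax hi (⟪‖s‖⁻¹ • s, w⟫_ℝ * ‖s‖⁻¹) ?_
  simp only [smul_sub, sum_sub_distrib, smul_comm (A i _), ← smul_sum, mul_smul]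
  exact sub_eq_zero.mpr hw

/-- for a weight matrix `A` of a strongly connected directed graph with
`a_ii > √2 Σ_{j≠i} a_ij`, for any configuration `x` with image `y = f_A(x)`, and any
orthonormal tangent bases `R i` (at `x i`) and `S i` (at `y i`), the block matrix with
blocks `a_ij • S_iᵀ R_j` is invertible (the differential of `f_A` has nonzero determinant). -/
theorem stmt_6 (n d : ℕ) (hn : 1 ≤ n) (hd : 2 ≤ d)
    (E : Fin n → Fin n → Prop)
    (hconn : ∀ i j, Relation.ReflTransGen E i j)
    (A : Matrix (Fin n) (Fin n) ℝ)
    (hApos : ∀ i j, 0 ≤ A i j)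
    (hAE : ∀ i j, i ≠ j → (0 < A i j ↔ E i j))
    (hdd : ∀ i, Real.sqrt 2 * ∑ j ∈ Finset.univ.erase i, A i j < A i i)
    (x : Fin n → EuclideanSpace ℝ (Fin d)) (hx : ∀ i, ‖x i‖ = 1)
    (R S : Fin n → Fin (d - 1) → EuclideanSpace ℝ (Fin d))
    (hR : ∀ i, Orthonormal ℝ (R i)) (hS : ∀ i, Orthonormal ℝ (S i))
    (hRx : ∀ i a, ⟪R i a, x i⟫_ℝ = 0)
    (hSy : ∀ i a, ⟪S i a, ‖∑ j, A i j • x j‖⁻¹ • ∑ j, A i j • x j⟫_ℝ = 0) :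
    (Matrix.of fun p q : Fin n × Fin (d - 1) =>
        A p.1 q.1 * ⟪S p.1 p.2, R q.1 q.2⟫_ℝ).det ≠ 0 :=
  stmt_6_general n d A hApos hdd x hx R S hR hS hRx hSy
end

section
/- Let n ≥ 1, d ≥ 2 and let A = [a_ij] ∈ ℝ^{n×n} have nonnegative entries and be strictly diagonally dominant. Let x be a consensus configuration with common value x̄ (a unit vector in ℝ^d), so x_i = x̄ for all i. Then the projected Jacobian at x satisfies J(x) = (D(AX)A) ⊗ (I_d − x̄ x̄^T), where D(AX) is the diagonal matrix with i-th entry (Σ_{j=1}^n a_ij)^{-1}; in particular D(AX)A is a row-stochastic matrix. -/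
/-!
At a consensus configuration `x ≡ x̄` every conical combination `Σ_j a_ij x̄` is the positive
multiple `(Σ_j a_ij) x̄` of `x̄`, so `f(x) = x` and `D(AX) = diag((Σ_j a_ij)⁻¹)`. Both projections
are then `I_n ⊗ P` with `P = I_d − x̄ x̄ᵀ`, and the mixed-product rule for Kronecker products
collapses `(I ⊗ P)(DA ⊗ I)(I ⊗ P)` to `DA ⊗ P²`, which is `DA ⊗ P` because `x̄` is a unit
vector.
-/

open scoped BigOperators

noncomputable section

/-- The conical combination `Σ_j a_ij x_j`. -/
def consSum {n d : ℕ} (A : Matrix (Fin n) (Fin n) ℝ)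
    (x : Fin n → EuclideanSpace ℝ (Fin d)) (i : Fin n) : EuclideanSpace ℝ (Fin d) :=
  ∑ j, A i j • x j

/-- The consensus map `f_A`: projection of the conical combination onto the unit sphere. -/
def consMap {n d : ℕ} (A : Matrix (Fin n) (Fin n) ℝ)
    (x : Fin n → EuclideanSpace ℝ (Fin d)) (i : Fin n) : EuclideanSpace ℝ (Fin d) :=
  ‖consSum A x i‖⁻¹ • consSum A x i

/-- The block-diagonal projection matrix `P_x` with diagonal blocks `I_d − x_i x_iᵀ`. -/
def projBlock {n d : ℕ} (x : Fin n → EuclideanSpace ℝ (Fin d)) :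
    Matrix (Fin n × Fin d) (Fin n × Fin d) ℝ :=
  Matrix.of fun p q =>
    if p.1 = q.1 then (if p.2 = q.2 then (1 : ℝ) else 0) - x p.1 p.2 * x p.1 q.2 else 0

/-- The diagonal normalization matrix `D(AX)`, with `i`-th entry `‖Σ_j a_ij x_j‖⁻¹`. -/
def Dmat {n d : ℕ} (A : Matrix (Fin n) (Fin n) ℝ)
    (x : Fin n → EuclideanSpace ℝ (Fin d)) : Matrix (Fin n) (Fin n) ℝ :=
  Matrix.diagonal fun i => ‖consSum A x i‖⁻¹

/-- The projected Jacobian `J(x) = P_{f(x)} (D(AX)A ⊗ I_d) P_x`. -/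
def Jmat {n d : ℕ} (A : Matrix (Fin n) (Fin n) ℝ)
    (x : Fin n → EuclideanSpace ℝ (Fin d)) :
    Matrix (Fin n × Fin d) (Fin n × Fin d) ℝ :=
  projBlock (consMap A x) *
    Matrix.kroneckerMap (· * ·) (Dmat A x * A) (1 : Matrix (Fin d) (Fin d) ℝ) *
    projBlock x

open Matrix

theorem sum_row_pos_of_strictDiagDominant {ι R : Type*} [Fintype ι] [DecidableEq ι]
    [AddCommMonoid R] [PartialOrder R] [IsOrderedCancelAddMonoid R] {A : Matrix ι ι R}
    (hA : ∀ i j, 0 ≤ A i j) (hdd : ∀ i, ∑ j ∈ Finset.univ.erase i, A i j < A i i) (i : ι) :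
    0 < ∑ j, A i j := by
  rw [← Finset.add_sum_erase _ _ (Finset.mem_univ i)]
  have hoff : 0 ≤ ∑ j ∈ Finset.univ.erase i, A i j := Finset.sum_nonneg fun j _ => hA i j
  exact add_pos_of_pos_of_nonneg (hoff.trans_lt (hdd i)) hoff

theorem diagonal_inv_sum_row_mul_mem_rowStochastic {ι R : Type*} [Fintype ι] [DecidableEq ι]
    [Field R] [LinearOrder R] [IsStrictOrderedRing R] {A : Matrix ι ι R} (hA : ∀ i j, 0 ≤ A i j)
    (hrow : ∀ i, 0 < ∑ j, A i j) :
    diagonal (fun i => (∑ j, A i j)⁻¹) * A ∈ rowStochastic R ι := by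
  refine mem_rowStochastic_iff_sum.2 ⟨fun i j => ?_, fun i => ?_⟩
  · rw [diagonal_mul]
    exact mul_nonneg (inv_nonneg.2 (hrow i).le) (hA i j)
  · simp only [diagonal_mul, ← Finset.mul_sum]
    exact inv_mul_cancel₀ (hrow i).ne'

theorem isIdempotentElem_one_sub_vecMulVec_self {ι R : Type*} [Fintype ι] [DecidableEq ι]
    [Ring R] {v : ι → R} (hv : v ⬝ᵥ v = 1) :
    IsIdempotentElem (1 - vecMulVec v v) := by
  refine IsIdempotentElem.one_sub ?_
  rw [IsIdempotentElem, vecMulVec_mul_vecMulVec, hv, one_smul]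

theorem EuclideanSpace.dotProduct_self_of_norm_eq_one {ι : Type*} [Fintype ι]
    {v : EuclideanSpace ℝ ι} (hv : ‖v‖ = 1) : ⇑v ⬝ᵥ ⇑v = 1 := by
  have h := real_inner_self_eq_norm_sq v
  rw [hv, one_pow, EuclideanSpace.inner_eq_star_dotProduct] at h
  simpa using h

section Consensus

variable {n d : ℕ} (A : Matrix (Fin n) (Fin n) ℝ) {v : EuclideanSpace ℝ (Fin d)}

theorem consSum_const (i : Fin n) : consSum A (fun _ => v) i = (∑ j, A i j) • v := by
  simp [consSum, ← Finset.sum_smul]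

theorem norm_consSum_const (hv : ‖v‖ = 1) {i : Fin n} (hi : 0 ≤ ∑ j, A i j) :
    ‖consSum A (fun _ => v) i‖ = ∑ j, A i j := by
  rw [consSum_const, norm_smul, hv, mul_one, Real.norm_of_nonneg hi]

variable {A}

theorem consMap_const (hrow : ∀ i, 0 < ∑ j, A i j) (hv : ‖v‖ = 1) :
    consMap A (fun _ => v) = fun _ => v := by
  funext i
  rw [consMap, norm_consSum_const A hv (hrow i).le, consSum_const, smul_smul,
    inv_mul_cancel₀ (hrow i).ne', one_smul]

theorem Dmat_const (hrow : ∀ i, 0 < ∑ j, A i j) (hv : ‖v‖ = 1) :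
    Dmat A (fun _ => v) = diagonal fun i => (∑ j, A i j)⁻¹ := by
  simp only [Dmat, norm_consSum_const A hv (hrow _).le]

theorem projBlock_const :
    projBlock (fun _ : Fin n => v) = kroneckerMap (· * ·) 1 (1 - vecMulVec ⇑v ⇑v) := by
  ext ⟨i, a⟩ ⟨j, b⟩
  by_cases h : i = j <;> simp [projBlock, one_apply, vecMulVec_apply, h]

theorem Jmat_const (hrow : ∀ i, 0 < ∑ j, A i j) (hv : ‖v‖ = 1) :
    Jmat A (fun _ => v) =
      kroneckerMap (· * ·) (diagonal (fun i => (∑ j, A i j)⁻¹) * A) (1 - vecMulVec ⇑v ⇑v) := by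
  have hP := isIdempotentElem_one_sub_vecMulVec_self
    (EuclideanSpace.dotProduct_self_of_norm_eq_one hv)
  rw [Jmat, consMap_const hrow hv, Dmat_const hrow hv, projBlock_const, ← mul_kronecker_mul,
    ← mul_kronecker_mul, Matrix.one_mul, Matrix.mul_one, Matrix.mul_one, hP.eq]

end Consensus

theorem stmt_7_general (n d : ℕ)
    (A : Matrix (Fin n) (Fin n) ℝ)
    (hApos : ∀ i j, 0 ≤ A i j)
    (hdd : ∀ i, ∑ j ∈ Finset.univ.erase i, A i j < A i i)
    (xbar : EuclideanSpace ℝ (Fin d)) (hxbar : ‖xbar‖ = 1) :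
    Jmat A (fun _ : Fin n => xbar) =
      Matrix.kroneckerMap (· * ·)
        (Matrix.diagonal (fun i => (∑ j, A i j)⁻¹) * A)
        ((1 : Matrix (Fin d) (Fin d) ℝ) - Matrix.of fun a b => xbar a * xbar b) ∧
    (∀ i, ∑ j, (Matrix.diagonal (fun i => (∑ j, A i j)⁻¹) * A) i j = 1) ∧
    (∀ i j, 0 ≤ (Matrix.diagonal (fun i => (∑ j, A i j)⁻¹) * A) i j) := by
  have hrow := sum_row_pos_of_strictDiagDominant hApos hdd
  have hS := diagonal_inv_sum_row_mul_mem_rowStochastic hApos hrow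
  exact ⟨Jmat_const hrow hxbar, sum_row_of_mem_rowStochastic hS,
    fun i j => nonneg_of_mem_rowStochastic hS⟩

/-- at a consensus configuration `x ≡ x̄`, the projected Jacobian equals
`(D(AX)A) ⊗ (I_d − x̄ x̄ᵀ)` where `D(AX)` has `i`-th diagonal entry `(Σ_j a_ij)⁻¹`; in
particular `D(AX)A` is row-stochastic. -/
theorem stmt_7 (n d : ℕ) (hn : 1 ≤ n) (hd : 2 ≤ d)
    (A : Matrix (Fin n) (Fin n) ℝ)
    (hApos : ∀ i j, 0 ≤ A i j)
    (hdd : ∀ i, ∑ j ∈ Finset.univ.erase i, A i j < A i i)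
    (xbar : EuclideanSpace ℝ (Fin d)) (hxbar : ‖xbar‖ = 1) :
    Jmat A (fun _ : Fin n => xbar) =
      Matrix.kroneckerMap (· * ·)
        (Matrix.diagonal (fun i => (∑ j, A i j)⁻¹) * A)
        ((1 : Matrix (Fin d) (Fin d) ℝ) - Matrix.of fun a b => xbar a * xbar b) ∧
    (∀ i, ∑ j, (Matrix.diagonal (fun i => (∑ j, A i j)⁻¹) * A) i j = 1) ∧
    (∀ i j, 0 ≤ (Matrix.diagonal (fun i => (∑ j, A i j)⁻¹) * A) i j) :=
  stmt_7_general n d A hApos hdd xbar hxbar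

end
end

section
/- Let d ≥ 2, let G = (V,E) be a strongly connected directed graph on vertices {1,…,n}, and let A = [a_ij] be a weight matrix for G. Then for every configuration x = (x_1,…,x_n) of unit vectors in ℝ^d, Σ_{i,j} a_ij ⟨x_i, x_j⟩ ≤ Σ_{i,j} a_ij, and equality holds if and only if x_1 = x_2 = … = x_n. Equivalently, the set of maximizers of x ↦ Σ_{i,j} a_ij ⟨x_i, x_j⟩ over configurations is exactly the consensus set C. -/
/-!
Each term satisfies `a_ij ⟨x_i, x_j⟩ ≤ a_ij` by Cauchy–Schwarz, with equality exactly when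
`a_ij = 0` or `x_i = x_j`. So equality of the sums forces `x_i = x_j` along every edge of `G`,
and strong connectivity spreads this to all pairs of vertices.
-/

open scoped BigOperators InnerProductSpace

section UnitVectors

variable {F : Type*} [NormedAddCommGroup F] [InnerProductSpace ℝ F]
  {u v : F} {a : ℝ}

lemma mul_inner_le_of_norm_eq_one (ha : 0 ≤ a) (hu : ‖u‖ = 1) (hv : ‖v‖ = 1) :
    a * ⟪u, v⟫_ℝ ≤ a := by
  have : ⟪u, v⟫_ℝ ≤ 1 := by
    simpa [hu, hv] using real_inner_le_norm u v
  simpa using mul_le_mul_of_nonneg_left this ha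

lemma mul_inner_eq_self_iff_of_norm_eq_one (hu : ‖u‖ = 1) (hv : ‖v‖ = 1) :
    a * ⟪u, v⟫_ℝ = a ↔ (a ≠ 0 → u = v) := by
  rw [← inner_eq_one_iff_of_norm_eq_one (𝕜 := ℝ) hu hv]
  constructor
  · intro h ha
    exact mul_left_cancel₀ ha (h.trans (mul_one a).symm)
  · intro h
    by_cases ha : a = 0
    · simp [ha]
    · simp [h ha]

end UnitVectors

section WeightedInnerSum

variable {ι F : Type*} [Fintype ι] [NormedAddCommGroup F] [InnerProductSpace ℝ F]
  {A : Matrix ι ι ℝ} {x : ι → F}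

lemma sum_mul_inner_le_sum (hA : ∀ i j, 0 ≤ A i j) (hx : ∀ i, ‖x i‖ = 1) :
    ∑ i, ∑ j, A i j * ⟪x i, x j⟫_ℝ ≤ ∑ i, ∑ j, A i j := by
  gcongr with i _ j _
  exact mul_inner_le_of_norm_eq_one (hA i j) (hx i) (hx j)

lemma sum_mul_inner_eq_sum_iff (hA : ∀ i j, 0 ≤ A i j) (hx : ∀ i, ‖x i‖ = 1) :
    ∑ i, ∑ j, A i j * ⟪x i, x j⟫_ℝ = ∑ i, ∑ j, A i j ↔ ∀ i j, A i j ≠ 0 → x i = x j := by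
  have hterm i j := mul_inner_le_of_norm_eq_one (hA i j) (hx i) (hx j)
  rw [Finset.sum_eq_sum_iff_of_le fun i _ ↦ Finset.sum_le_sum fun j _ ↦ hterm i j]
  simp only [Finset.mem_univ, true_implies,
    Finset.sum_eq_sum_iff_of_le fun j _ ↦ hterm _ j,
    mul_inner_eq_self_iff_of_norm_eq_one (hx _) (hx _)]

end WeightedInnerSum

lemma forall_eq_of_reflTransGen {α β : Type*} {r : α → α → Prop} {f : α → β}
    (hconn : ∀ i j, Relation.ReflTransGen r i j) (hr : ∀ i j, r i j → f i = f j) (i j : α) :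
    f i = f j := by
  induction hconn i j with
  | refl => rfl
  | tail _ hbc ih => exact ih.trans (hr _ _ hbc)

theorem stmt_9_general (n d : ℕ)
    (E : Fin n → Fin n → Prop)
    (hconn : ∀ i j, Relation.ReflTransGen E i j)
    (A : Matrix (Fin n) (Fin n) ℝ)
    (hApos : ∀ i j, 0 ≤ A i j)
    (hAE : ∀ i j, i ≠ j → (0 < A i j ↔ E i j))
    (x : Fin n → EuclideanSpace ℝ (Fin d)) (hx : ∀ i, ‖x i‖ = 1) :
    (∑ i, ∑ j, A i j * ⟪x i, x j⟫_ℝ ≤ ∑ i, ∑ j, A i j) ∧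
    ((∑ i, ∑ j, A i j * ⟪x i, x j⟫_ℝ = ∑ i, ∑ j, A i j) ↔ ∀ i j, x i = x j) := by
  refine ⟨sum_mul_inner_le_sum hApos hx, ?_⟩
  rw [sum_mul_inner_eq_sum_iff hApos hx]
  refine ⟨fun hedge ↦ forall_eq_of_reflTransGen hconn fun i j hij ↦ ?_,
    fun hall i j _ ↦ hall i j⟩
  by_cases hne : i = j
  · rw [hne]
  · exact hedge i j ((hAE i j hne).mpr hij).ne'

/-- for a weight matrix of a strongly connected directed graph,
`Σ_{i,j} a_ij ⟨x_i, x_j⟩ ≤ Σ_{i,j} a_ij` for every configuration of unit vectors,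
with equality iff all the `x_i` are equal (the maximizers are exactly the consensus set). -/
theorem stmt_9 (n d : ℕ) (hn : 1 ≤ n) (hd : 2 ≤ d)
    (E : Fin n → Fin n → Prop)
    (hconn : ∀ i j, Relation.ReflTransGen E i j)
    (A : Matrix (Fin n) (Fin n) ℝ)
    (hApos : ∀ i j, 0 ≤ A i j)
    (hAE : ∀ i j, i ≠ j → (0 < A i j ↔ E i j))
    (x : Fin n → EuclideanSpace ℝ (Fin d)) (hx : ∀ i, ‖x i‖ = 1) :
    (∑ i, ∑ j, A i j * ⟪x i, x j⟫_ℝ ≤ ∑ i, ∑ j, A i j) ∧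
    ((∑ i, ∑ j, A i j * ⟪x i, x j⟫_ℝ = ∑ i, ∑ j, A i j) ↔ ∀ i j, x i = x j) :=
  stmt_9_general n d E hconn A hApos hAE x hx
end

section
/- Let n ≥ 1, d ≥ 2 and let A = [a_ij] ∈ ℝ^{n×n} be symmetric with nonnegative entries and strictly diagonally dominant (hence positive definite). Define V_A(x) = Σ_{i,j} a_ij ⟨x_i, x_j⟩ for a configuration x = (x_1,…,x_n). Then for every configuration x, 0 ≤ Σ_{i,j} a_ij ⟨f_i(x) − x_i, f_j(x) − x_j⟩ ≤ V_A(f(x)) − V_A(x), and V_A(f(x)) = V_A(x) if and only if f(x) = x. In particular V_A strictly increases along the iteration except at fixed points. -/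
open scoped BigOperators InnerProductSpace

noncomputable section

/-- The potential `V_A(x) = Σ_{i,j} a_ij ⟨x_i, x_j⟩`. -/
def potential {n d : ℕ} (A : Matrix (Fin n) (Fin n) ℝ)
    (x : Fin n → EuclideanSpace ℝ (Fin d)) : ℝ :=
  ∑ i, ∑ j, A i j * ⟪x i, x j⟫_ℝ

/-- A symmetric, entrywise-nonnegative, strictly diagonally dominant matrix yields a
positive semidefinite quadratic form on configurations. -/
lemma psd_aux {n d : ℕ} (A : Matrix (Fin n) (Fin n) ℝ)
    (hAsym : A.IsSymm) (hApos : ∀ i j, 0 ≤ A i j)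
    (hdd : ∀ i, ∑ j ∈ Finset.univ.erase i, A i j < A i i)
    (u : Fin n → EuclideanSpace ℝ (Fin d)) :
    0 ≤ ∑ i, ∑ j, A i j * ⟪u i, u j⟫_ℝ := by
  have hsym : ∀ i j, A j i = A i j := fun i j => hAsym.apply i j
  have h1 : ∀ i, A i i * ‖u i‖ ^ 2
      - ∑ j ∈ Finset.univ.erase i, A i j * (‖u i‖ ^ 2 + ‖u j‖ ^ 2) / 2
      ≤ ∑ j, A i j * ⟪u i, u j⟫_ℝ := by
    intro i
    rw [← Finset.add_sum_erase Finset.univ _ (Finset.mem_univ i),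
      real_inner_self_eq_norm_sq]
    have hb : ∀ j ∈ Finset.univ.erase i, -(A i j * (‖u i‖ ^ 2 + ‖u j‖ ^ 2) / 2)
        ≤ A i j * ⟪u i, u j⟫_ℝ := by
      intro j _
      have h := abs_real_inner_le_norm (u i) (u j)
      have h2 := (abs_le.mp h).1
      nlinarith [sq_nonneg (‖u i‖ - ‖u j‖), hApos i j]
    have hsum := Finset.sum_le_sum hb
    rw [Finset.sum_neg_distrib] at hsum
    linarith
  have hQP : ∑ i, ∑ j ∈ Finset.univ.erase i, A i j * ‖u j‖ ^ 2
      = ∑ i, ∑ j ∈ Finset.univ.erase i, A i j * ‖u i‖ ^ 2 := by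
    rw [Finset.sum_comm' (t' := Finset.univ) (s' := fun j => Finset.univ.erase j)
      (by intro a b; simp [Finset.mem_erase]; tauto)]
    refine Finset.sum_congr rfl fun j _ => Finset.sum_congr rfl fun i _ => ?_
    rw [hsym j i]
  have hsplit : ∀ i, ∑ j ∈ Finset.univ.erase i, A i j * (‖u i‖ ^ 2 + ‖u j‖ ^ 2) / 2
      = (∑ j ∈ Finset.univ.erase i, A i j * ‖u i‖ ^ 2) / 2
        + (∑ j ∈ Finset.univ.erase i, A i j * ‖u j‖ ^ 2) / 2 := by
    intro i
    rw [Finset.sum_div, Finset.sum_div, ← Finset.sum_add_distrib]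
    refine Finset.sum_congr rfl fun j _ => by ring
  have h2 : (0:ℝ) ≤ ∑ i, (A i i * ‖u i‖ ^ 2
      - ∑ j ∈ Finset.univ.erase i, A i j * (‖u i‖ ^ 2 + ‖u j‖ ^ 2) / 2) := by
    calc (0:ℝ) ≤ ∑ i, (A i i - ∑ j ∈ Finset.univ.erase i, A i j) * ‖u i‖ ^ 2 :=
          Finset.sum_nonneg fun i _ => mul_nonneg (by linarith [hdd i]) (sq_nonneg _)
      _ = ∑ i, (A i i * ‖u i‖ ^ 2 - ∑ j ∈ Finset.univ.erase i, A i j * ‖u i‖ ^ 2) := by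
          refine Finset.sum_congr rfl fun i _ => by rw [sub_mul, Finset.sum_mul]
      _ = ∑ i, (A i i * ‖u i‖ ^ 2
          - ∑ j ∈ Finset.univ.erase i, A i j * (‖u i‖ ^ 2 + ‖u j‖ ^ 2) / 2) := by
          rw [Finset.sum_sub_distrib, Finset.sum_sub_distrib]
          have hh : ∑ i, ∑ j ∈ Finset.univ.erase i, A i j * (‖u i‖ ^ 2 + ‖u j‖ ^ 2) / 2
              = ∑ i, ∑ j ∈ Finset.univ.erase i, A i j * ‖u i‖ ^ 2 := by
            simp only [hsplit]
            rw [Finset.sum_add_distrib, ← Finset.sum_div, ← Finset.sum_div, hQP]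
            ring
          rw [hh]
  calc (0:ℝ) ≤ _ := h2
    _ ≤ ∑ i, ∑ j, A i j * ⟪u i, u j⟫_ℝ := Finset.sum_le_sum fun i _ => h1 i

/-- for a symmetric nonnegative strictly diagonally dominant weight matrix,
`0 ≤ Σ_{i,j} a_ij ⟨f_i(x) − x_i, f_j(x) − x_j⟩ ≤ V_A(f(x)) − V_A(x)`, and
`V_A(f(x)) = V_A(x)` iff `x` is a fixed point: `V_A` strictly increases off fixed points. -/
theorem stmt_11 (n d : ℕ) (hn : 1 ≤ n) (hd : 2 ≤ d)
    (A : Matrix (Fin n) (Fin n) ℝ)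
    (hAsym : A.IsSymm)
    (hApos : ∀ i j, 0 ≤ A i j)
    (hdd : ∀ i, ∑ j ∈ Finset.univ.erase i, A i j < A i i)
    (x : Fin n → EuclideanSpace ℝ (Fin d)) (hx : ∀ i, ‖x i‖ = 1) :
    (0 ≤ ∑ i, ∑ j, A i j * ⟪consMap A x i - x i, consMap A x j - x j⟫_ℝ) ∧
    (∑ i, ∑ j, A i j * ⟪consMap A x i - x i, consMap A x j - x j⟫_ℝ ≤
      potential A (consMap A x) - potential A x) ∧
    (potential A (consMap A x) = potential A x ↔ ∀ i, consMap A x i = x i) := by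
  have hsym : ∀ i j, A j i = A i j := fun i j => hAsym.apply i j
  set y := consMap A x with hy
  set s := consSum A x with hs
  have hyi : ∀ i, y i = ‖s i‖⁻¹ • s i := fun i => rfl
  -- identities for inner products against the conical sums
  have I1 : ∀ v : Fin n → EuclideanSpace ℝ (Fin d),
      ∑ i, ∑ j, A i j * ⟪v i, x j⟫_ℝ = ∑ i, ⟪v i, s i⟫_ℝ := by
    intro v
    refine Finset.sum_congr rfl fun i _ => ?_
    have hsi : s i = ∑ j, A i j • x j := rfl
    rw [hsi, inner_sum]
    exact Finset.sum_congr rfl fun j _ => (real_inner_smul_right (v i) (x j) (A i j)).symm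
  have I2 : ∀ v : Fin n → EuclideanSpace ℝ (Fin d),
      ∑ i, ∑ j, A i j * ⟪x i, v j⟫_ℝ = ∑ j, ⟪v j, s j⟫_ℝ := by
    intro v
    rw [Finset.sum_comm]
    refine Finset.sum_congr rfl fun j _ => ?_
    calc ∑ i, A i j * ⟪x i, v j⟫_ℝ = ∑ i, A j i * ⟪v j, x i⟫_ℝ := by
          refine Finset.sum_congr rfl fun i _ => ?_
          rw [hsym i j, real_inner_comm (v j) (x i)]
      _ = ⟪v j, s j⟫_ℝ := by
          have hsj : s j = ∑ i, A j i • x i := rfl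
          rw [hsj, inner_sum]
          exact Finset.sum_congr rfl fun i _ =>
            (real_inner_smul_right (v j) (x i) (A j i)).symm
  have hxs_pos : ∀ i, 0 < ⟪x i, s i⟫_ℝ := by
    intro i
    have hxs : ⟪x i, s i⟫_ℝ = ∑ j, A i j * ⟪x i, x j⟫_ℝ := by
      have hsi : s i = ∑ j, A i j • x j := rfl
      rw [hsi, inner_sum]
      exact Finset.sum_congr rfl fun j _ => real_inner_smul_right (x i) (x j) (A i j)
    rw [hxs, ← Finset.add_sum_erase Finset.univ _ (Finset.mem_univ i),
      real_inner_self_eq_norm_sq, hx i]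
    have hb : ∀ j ∈ Finset.univ.erase i, -(A i j) ≤ A i j * ⟪x i, x j⟫_ℝ := by
      intro j _
      have h := abs_real_inner_le_norm (x i) (x j)
      rw [hx i, hx j, one_mul] at h
      have h2 := (abs_le.mp h).1
      nlinarith [hApos i j]
    have hsum := Finset.sum_le_sum hb
    rw [Finset.sum_neg_distrib] at hsum
    have hd := hdd i
    nlinarith
  have hspos : ∀ i, 0 < ‖s i‖ := by
    intro i
    have h := real_inner_le_norm (x i) (s i)
    rw [hx i, one_mul] at h
    exact lt_of_lt_of_le (hxs_pos i) h
  have hsne : ∀ i, ‖s i‖ ≠ 0 := fun i => ne_of_gt (hspos i)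
  have hys : ∀ i, ⟪y i, s i⟫_ℝ = ‖s i‖ := by
    intro i
    rw [hyi i, real_inner_smul_left, real_inner_self_eq_norm_sq, sq]
    field_simp
  -- expansion of the quadratic form at y - x
  have hD : ∑ i, ∑ j, A i j * ⟪y i - x i, y j - x j⟫_ℝ
      = potential A y + potential A x - 2 * ∑ i, ‖s i‖ := by
    have hexp : ∀ i j, A i j * ⟪y i - x i, y j - x j⟫_ℝ
        = A i j * ⟪y i, y j⟫_ℝ - A i j * ⟪y i, x j⟫_ℝ
          - A i j * ⟪x i, y j⟫_ℝ + A i j * ⟪x i, x j⟫_ℝ := by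
      intro i j
      rw [inner_sub_left, inner_sub_right, inner_sub_right]
      ring
    have h1 : ∑ i, ∑ j, A i j * ⟪y i, x j⟫_ℝ = ∑ i, ‖s i‖ := by
      rw [I1 y]; exact Finset.sum_congr rfl fun i _ => hys i
    have h2 : ∑ i, ∑ j, A i j * ⟪x i, y j⟫_ℝ = ∑ i, ‖s i‖ := by
      rw [I2 y]; exact Finset.sum_congr rfl fun i _ => hys i
    simp only [hexp, Finset.sum_add_distrib, Finset.sum_sub_distrib]
    rw [h1, h2]
    simp only [potential]
    ring
  have hVx : potential A x = ∑ i, ⟪x i, s i⟫_ℝ := by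
    simp only [potential]
    exact I1 x
  have hgap : ∀ i, 0 ≤ ‖s i‖ - ⟪x i, s i⟫_ℝ := by
    intro i
    have h := real_inner_le_norm (x i) (s i)
    rw [hx i, one_mul] at h
    linarith
  have hkey : potential A y - potential A x
      = (∑ i, ∑ j, A i j * ⟪y i - x i, y j - x j⟫_ℝ)
        + 2 * ∑ i, (‖s i‖ - ⟪x i, s i⟫_ℝ) := by
    rw [hD, Finset.sum_sub_distrib, ← hVx]
    ring
  have hpsd : 0 ≤ ∑ i, ∑ j, A i j * ⟪y i - x i, y j - x j⟫_ℝ :=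
    psd_aux A hAsym hApos hdd (fun i => y i - x i)
  have hgapsum : 0 ≤ ∑ i, (‖s i‖ - ⟪x i, s i⟫_ℝ) :=
    Finset.sum_nonneg fun i _ => hgap i
  refine ⟨hpsd, by linarith, ?_⟩
  constructor
  · intro hVeq
    have hgz : ∑ i, (‖s i‖ - ⟪x i, s i⟫_ℝ) = 0 := by
      have := hVeq
      linarith
    have hterm := (Finset.sum_eq_zero_iff_of_nonneg (fun i _ => hgap i)).mp hgz
    intro i
    have h0 : ⟪x i, s i⟫_ℝ = ‖x i‖ * ‖s i‖ := by
      have ht := hterm i (Finset.mem_univ i)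
      rw [hx i, one_mul]
      linarith
    have h1 := inner_eq_norm_mul_iff_real.mp h0
    rw [hx i, one_smul] at h1
    calc y i = ‖s i‖⁻¹ • (‖s i‖ • x i) := by rw [hyi i, h1]
      _ = x i := by rw [smul_smul, inv_mul_cancel₀ (hsne i), one_smul]
  · intro hfix
    exact congrArg (potential A) (funext hfix)

end
end

section
/- Let n ≥ 1, d ≥ 2 and let A = [a_ij] ∈ ℝ^{n×n} be symmetric with nonnegative entries and strictly diagonally dominant. Then for every initial configuration x, every cluster point of the sequence of iterates (f_A^k(x))_{k≥0} (i.e. every limit of a convergent subsequence) is a fixed point of f_A. -/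
open scoped BigOperators

noncomputable section

/-- The consensus map `f_A` as a self-map of tuples of vectors. -/
def consMapFull {n d : ℕ} (A : Matrix (Fin n) (Fin n) ℝ)
    (x : Fin n → EuclideanSpace ℝ (Fin d)) : Fin n → EuclideanSpace ℝ (Fin d) :=
  fun i => ‖∑ j, A i j • x j‖⁻¹ • ∑ j, A i j • x j

/-!
The energy `E(x) = ∑ᵢⱼ aᵢⱼ ⟪xᵢ, xⱼ⟫` is a Lyapunov function for `f_A`. For symmetric, nonnegative,
diagonally dominant `A` the quadratic form `δ ↦ ∑ᵢⱼ aᵢⱼ ⟪δᵢ, δⱼ⟫` is positive semidefinite, and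
expanding it at `δ = f(x) - x` gives `E(f x) ≥ E(x) + 2 ∑ᵢ (‖vᵢ‖ - ⟪xᵢ, vᵢ⟫)` with
`vᵢ = ∑ⱼ aᵢⱼ xⱼ`. On unit configurations every summand is nonnegative by Cauchy–Schwarz and vanishes
only when `xᵢ = vᵢ / ‖vᵢ‖`. Hence `E` increases along the orbit, and at a cluster point `z`
continuity forces `E(f z) = E(z)`, so that `f z = z`.
-/

open scoped RealInnerProductSpace
open Finset Filter Topology

theorem Function.apply_map_eq_of_monotone_of_tendsto_subseq {X : Type*} [TopologicalSpace X]
    {f : X → X} {V : X → ℝ} {x z : X} {φ : ℕ → ℕ}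
    (hmono : Monotone fun k => V (f^[k] x)) (hV : Continuous V) (hf : ContinuousAt f z)
    (hφ : StrictMono φ) (hlim : Tendsto (fun k => f^[φ k] x) atTop (𝓝 z)) :
    V (f z) = V z := by
  have hsub : Tendsto (fun k => V (f^[φ k] x)) atTop (𝓝 (V z)) := (hV.tendsto z).comp hlim
  have hsucc : Tendsto (fun k => V (f^[φ k + 1] x)) atTop (𝓝 (V z)) :=
    tendsto_of_tendsto_of_tendsto_of_le_of_le hsub (hsub.comp (tendsto_add_atTop_nat 1))
      (fun k => hmono (φ k).le_succ) (fun k => hmono (hφ k.lt_succ_self))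
  have hsucc' : Tendsto (fun k => V (f^[φ k + 1] x)) atTop (𝓝 (V (f z))) := by
    simp only [Function.iterate_succ_apply']
    exact (hV.tendsto (f z)).comp (hf.tendsto.comp hlim)
  exact tendsto_nhds_unique hsucc' hsucc

namespace Consensus

variable {ι E : Type*} [Fintype ι] [NormedAddCommGroup E] [InnerProductSpace ℝ E]

def weightedSum (A : Matrix ι ι ℝ) (x : ι → E) (i : ι) : E := ∑ j, A i j • x j

def consensusMap (A : Matrix ι ι ℝ) (x : ι → E) : ι → E :=
  fun i => ‖weightedSum A x i‖⁻¹ • weightedSum A x i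

def energy (A : Matrix ι ι ℝ) (x : ι → E) : ℝ := ∑ i, ∑ j, A i j * ⟪x i, x j⟫

variable {A : Matrix ι ι ℝ}

theorem sum_sum_mul_right_eq_left (hA : A.IsSymm) (r : ι → ℝ) :
    ∑ i, ∑ j, A i j * r j = ∑ i, ∑ j, A i j * r i := by
  rw [sum_comm]
  exact sum_congr rfl fun i _ => sum_congr rfl fun j _ => by rw [hA.apply i j]

theorem energy_nonneg [DecidableEq ι] (hA : A.IsSymm) (hpos : ∀ i j, 0 ≤ A i j)
    (hdom : ∀ i, ∑ j ∈ univ.erase i, A i j ≤ A i i) (δ : ι → E) : 0 ≤ energy A δ := by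
  -- `2 a_ij ⟪δ_i, δ_j⟫ = a_ij ‖δ_i + δ_j‖² - a_ij ‖δ_i‖² - a_ij ‖δ_j‖²`; keep only the diagonal
  -- of the first (nonnegative) term and bound the other two by the row sums `≤ 2 a_ii`.
  set r : ι → ℝ := fun i => ‖δ i‖ ^ 2
  have hpolar : 2 * energy A δ = ∑ i, ∑ j, A i j * ‖δ i + δ j‖ ^ 2
      - ∑ i, ∑ j, A i j * r i - ∑ i, ∑ j, A i j * r j := by
    simp only [energy, mul_sum, ← sum_sub_distrib, r, norm_add_sq_real]
    exact sum_congr rfl fun i _ => sum_congr rfl fun j _ => by ring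
  have hdiag : ∑ i, 4 * A i i * r i ≤ ∑ i, ∑ j, A i j * ‖δ i + δ j‖ ^ 2 := by
    refine sum_le_sum fun i _ => ?_
    calc 4 * A i i * r i = A i i * ‖δ i + δ i‖ ^ 2 := by
          rw [← two_smul ℝ (δ i), norm_smul]; simp only [Real.norm_ofNat, r]; ring
      _ ≤ ∑ j, A i j * ‖δ i + δ j‖ ^ 2 :=
          single_le_sum (f := fun j => A i j * ‖δ i + δ j‖ ^ 2)
            (fun j _ => mul_nonneg (hpos i j) (sq_nonneg _)) (mem_univ i)
  have hrow : ∑ i, ∑ j, A i j * r i ≤ ∑ i, 2 * A i i * r i := by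
    refine sum_le_sum fun i _ => ?_
    rw [← sum_mul, ← add_sum_erase _ _ (mem_univ i)]
    exact mul_le_mul_of_nonneg_right (by linarith [hdom i]) (sq_nonneg _)
  rw [sum_sum_mul_right_eq_left hA] at hpolar
  have : ∑ i, 4 * A i i * r i = 2 * ∑ i, 2 * A i i * r i := by
    rw [mul_sum]; exact sum_congr rfl fun i _ => by ring
  linarith

theorem energy_sub (hA : A.IsSymm) (x y : ι → E) :
    energy A (x - y) = energy A x - 2 * ∑ i, ∑ j, A i j * ⟪x i, y j⟫ + energy A y := by
  have hswap : ∑ i, ∑ j, A i j * ⟪y i, x j⟫ = ∑ i, ∑ j, A i j * ⟪x i, y j⟫ := by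
    rw [sum_comm]
    exact sum_congr rfl fun i _ => sum_congr rfl fun j _ => by
      rw [hA.apply i j, real_inner_comm]
  have hexp : energy A (x - y) = energy A x - ∑ i, ∑ j, A i j * ⟪x i, y j⟫
      - ∑ i, ∑ j, A i j * ⟪y i, x j⟫ + energy A y := by
    simp only [energy, ← sum_sub_distrib, ← sum_add_distrib, Pi.sub_apply, inner_sub_left,
      inner_sub_right]
    exact sum_congr rfl fun i _ => sum_congr rfl fun j _ => by ring
  rw [hexp, hswap]; ring

theorem sum_mul_inner_eq_inner_weightedSum (A : Matrix ι ι ℝ) (w : E) (x : ι → E) (i : ι) :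
    ∑ j, A i j * ⟪w, x j⟫ = ⟪w, weightedSum A x i⟫ := by
  simp only [weightedSum, inner_sum, real_inner_smul_right]

theorem energy_eq_sum_inner_weightedSum (A : Matrix ι ι ℝ) (x : ι → E) :
    energy A x = ∑ i, ⟪x i, weightedSum A x i⟫ :=
  sum_congr rfl fun i _ => sum_mul_inner_eq_inner_weightedSum A (x i) x i

theorem inner_consensusMap_weightedSum (A : Matrix ι ι ℝ) (x : ι → E) (i : ι) :
    ⟪consensusMap A x i, weightedSum A x i⟫ = ‖weightedSum A x i‖ := by
  rw [consensusMap, real_inner_smul_left, real_inner_self_eq_norm_sq]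
  rcases eq_or_ne ‖weightedSum A x i‖ 0 with h | h
  · simp [h]
  · field_simp

theorem energy_add_le_energy_consensusMap [DecidableEq ι] (hA : A.IsSymm)
    (hpos : ∀ i j, 0 ≤ A i j) (hdom : ∀ i, ∑ j ∈ univ.erase i, A i j ≤ A i i) (x : ι → E) :
    energy A x + 2 * ∑ i, (‖weightedSum A x i‖ - ⟪x i, weightedSum A x i⟫)
      ≤ energy A (consensusMap A x) := by
  have h := energy_nonneg hA hpos hdom (consensusMap A x - x)
  have hcross : ∑ i, ∑ j, A i j * ⟪consensusMap A x i, x j⟫ = ∑ i, ‖weightedSum A x i‖ :=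
    sum_congr rfl fun i _ => by
      rw [sum_mul_inner_eq_inner_weightedSum, inner_consensusMap_weightedSum]
  rw [energy_sub hA, hcross] at h
  rw [sum_sub_distrib, ← energy_eq_sum_inner_weightedSum]
  linarith

theorem inner_le_norm_weightedSum {x : ι → E} (hx : ∀ i, ‖x i‖ = 1) (i : ι) :
    ⟪x i, weightedSum A x i⟫ ≤ ‖weightedSum A x i‖ := by
  simpa [hx i] using real_inner_le_norm (x i) (weightedSum A x i)

theorem norm_weightedSum_pos [DecidableEq ι] (hpos : ∀ i j, 0 ≤ A i j)
    (hdom : ∀ i, ∑ j ∈ univ.erase i, A i j < A i i) {x : ι → E} (hx : ∀ i, ‖x i‖ = 1)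
    (i : ι) : 0 < ‖weightedSum A x i‖ := by
  have hoff : ‖∑ j ∈ univ.erase i, A i j • x j‖ ≤ ∑ j ∈ univ.erase i, A i j :=
    (norm_sum_le _ _).trans_eq <| sum_congr rfl fun j _ => by
      rw [norm_smul, hx j, Real.norm_of_nonneg (hpos i j), mul_one]
  have hdiag : ‖A i i • x i‖ = A i i := by
    rw [norm_smul, hx i, Real.norm_of_nonneg (hpos i i), mul_one]
  have hsplit : weightedSum A x i = A i i • x i + ∑ j ∈ univ.erase i, A i j • x j :=
    (add_sum_erase _ _ (mem_univ i)).symm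
  have := norm_sub_norm_le (A i i • x i) (-∑ j ∈ univ.erase i, A i j • x j)
  rw [sub_neg_eq_add, ← hsplit, norm_neg] at this
  linarith [hdom i]

theorem norm_consensusMap_apply [DecidableEq ι] (hpos : ∀ i j, 0 ≤ A i j)
    (hdom : ∀ i, ∑ j ∈ univ.erase i, A i j < A i i) {x : ι → E} (hx : ∀ i, ‖x i‖ = 1)
    (i : ι) : ‖consensusMap A x i‖ = 1 := by
  rw [consensusMap, norm_smul, norm_inv, norm_norm,
    inv_mul_cancel₀ (norm_weightedSum_pos hpos hdom hx i).ne']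

theorem norm_iterate_consensusMap_apply [DecidableEq ι] (hpos : ∀ i j, 0 ≤ A i j)
    (hdom : ∀ i, ∑ j ∈ univ.erase i, A i j < A i i) {x : ι → E} (hx : ∀ i, ‖x i‖ = 1)
    (k : ℕ) (i : ι) : ‖(consensusMap A)^[k] x i‖ = 1 := by
  induction k generalizing i with
  | zero => exact hx i
  | succ k ih =>
    rw [Function.iterate_succ_apply']
    exact norm_consensusMap_apply hpos hdom ih i

theorem monotone_energy_iterate [DecidableEq ι] (hA : A.IsSymm) (hpos : ∀ i j, 0 ≤ A i j)
    (hdom : ∀ i, ∑ j ∈ univ.erase i, A i j < A i i) {x : ι → E} (hx : ∀ i, ‖x i‖ = 1) :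
    Monotone fun k => energy A ((consensusMap A)^[k] x) := by
  refine monotone_nat_of_le_succ fun k => ?_
  have hk := norm_iterate_consensusMap_apply hpos hdom hx k
  have hgap : 0 ≤ ∑ i, (‖weightedSum A _ i‖ - ⟪_, weightedSum A _ i⟫) :=
    sum_nonneg fun i _ => sub_nonneg.2 (inner_le_norm_weightedSum hk i)
  rw [Function.iterate_succ_apply']
  linarith [energy_add_le_energy_consensusMap hA hpos (fun i => (hdom i).le)
    ((consensusMap A)^[k] x)]

theorem consensusMap_eq_self_of_energy_le [DecidableEq ι] (hA : A.IsSymm)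
    (hpos : ∀ i j, 0 ≤ A i j) (hdom : ∀ i, ∑ j ∈ univ.erase i, A i j < A i i) {x : ι → E}
    (hx : ∀ i, ‖x i‖ = 1) (hE : energy A (consensusMap A x) ≤ energy A x) :
    consensusMap A x = x := by
  have hgap_nonneg : ∀ i ∈ univ, 0 ≤ ‖weightedSum A x i‖ - ⟪x i, weightedSum A x i⟫ :=
    fun i _ => sub_nonneg.2 (inner_le_norm_weightedSum hx i)
  have hgap : ∑ i, (‖weightedSum A x i‖ - ⟪x i, weightedSum A x i⟫) = 0 := by
    linarith [sum_nonneg hgap_nonneg,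
      energy_add_le_energy_consensusMap hA hpos (fun i => (hdom i).le) x]
  funext i
  have hcs : ⟪x i, weightedSum A x i⟫ = ‖x i‖ * ‖weightedSum A x i‖ := by
    rw [hx i, one_mul]
    linarith [(sum_eq_zero_iff_of_nonneg hgap_nonneg).1 hgap i (mem_univ i)]
  rw [inner_eq_norm_mul_iff_real, hx i, one_smul] at hcs
  rw [consensusMap]
  nth_rw 2 [← hcs]
  exact inv_smul_smul₀ (norm_weightedSum_pos hpos hdom hx i).ne' _

theorem continuous_energy (A : Matrix ι ι ℝ) : Continuous (energy (E := E) A) := by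
  unfold energy; fun_prop

theorem continuousAt_consensusMap {x : ι → E} (hx : ∀ i, weightedSum A x i ≠ 0) :
    ContinuousAt (consensusMap A) x := by
  have hv : ∀ i, Continuous fun x : ι → E => weightedSum A x i := fun i => by
    unfold weightedSum; fun_prop
  refine continuousAt_pi.2 fun i => ?_
  exact (((hv i).norm.continuousAt).inv₀ (norm_ne_zero_iff.2 (hx i))).smul (hv i).continuousAt

theorem consMapFull_eq_consensusMap {n d : ℕ} (A : Matrix (Fin n) (Fin n) ℝ) :
    consMapFull (d := d) A = consensusMap A :=
  rfl

end Consensus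

open Consensus in
theorem stmt_12_general (n d : ℕ)
    (A : Matrix (Fin n) (Fin n) ℝ)
    (hAsym : A.IsSymm)
    (hApos : ∀ i j, 0 ≤ A i j)
    (hdd : ∀ i, ∑ j ∈ Finset.univ.erase i, A i j < A i i)
    (x₀ : Fin n → EuclideanSpace ℝ (Fin d)) (hx₀ : ∀ i, ‖x₀ i‖ = 1)
    (z : Fin n → EuclideanSpace ℝ (Fin d))
    (hz : ∃ φ : ℕ → ℕ, StrictMono φ ∧
        Filter.Tendsto (fun k => (consMapFull A)^[φ k] x₀) Filter.atTop (nhds z)) :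
    consMapFull A z = z := by
  obtain ⟨φ, hφ, hlim⟩ := hz
  rw [consMapFull_eq_consensusMap] at hlim ⊢
  have hz₁ : ∀ i, ‖z i‖ = 1 := by
    have hclosed : IsClosed {x : Fin n → EuclideanSpace ℝ (Fin d) | ∀ i, ‖x i‖ = 1} :=
      Set.ofPred_forall _ ▸ isClosed_iInter fun i => isClosed_eq (by fun_prop) continuous_const
    exact hclosed.mem_of_tendsto hlim (Eventually.of_forall fun k =>
      norm_iterate_consensusMap_apply hApos hdd hx₀ (φ k))
  have hcont : ContinuousAt (consensusMap A) z :=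
    continuousAt_consensusMap fun i => norm_pos_iff.1 (norm_weightedSum_pos hApos hdd hz₁ i)
  exact consensusMap_eq_self_of_energy_le hAsym hApos hdd hz₁
    (Function.apply_map_eq_of_monotone_of_tendsto_subseq
      (monotone_energy_iterate hAsym hApos hdd hx₀) (continuous_energy A) hcont hφ hlim).le

/-- for a symmetric nonnegative strictly diagonally dominant weight matrix,
every cluster point of the sequence of iterates `f_A^k(x₀)` (limit of a convergent
subsequence) is a fixed point of `f_A`. -/
theorem stmt_12 (n d : ℕ) (hn : 1 ≤ n) (hd : 2 ≤ d)
    (A : Matrix (Fin n) (Fin n) ℝ)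
    (hAsym : A.IsSymm)
    (hApos : ∀ i j, 0 ≤ A i j)
    (hdd : ∀ i, ∑ j ∈ Finset.univ.erase i, A i j < A i i)
    (x₀ : Fin n → EuclideanSpace ℝ (Fin d)) (hx₀ : ∀ i, ‖x₀ i‖ = 1)
    (z : Fin n → EuclideanSpace ℝ (Fin d))
    (hz : ∃ φ : ℕ → ℕ, StrictMono φ ∧
        Filter.Tendsto (fun k => (consMapFull A)^[φ k] x₀) Filter.atTop (nhds z)) :
    consMapFull A z = z :=
  stmt_12_general n d A hAsym hApos hdd x₀ hx₀ z hz

end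
end

section
/- Let N ≥ 1 and let P, D, H ∈ ℝ^{N×N} satisfy: P is symmetric with P² = P (an orthogonal projection); D is diagonal with strictly positive diagonal entries and DP = PD; H is symmetric with P H P = H. If H has a strictly positive eigenvalue, then the matrix DH + P has a real eigenvalue strictly greater than 1; in particular DH + P has an eigenvalue of modulus strictly greater than 1. -/
/-!
Write `D = S²` with `S = diag(√dᵢ)`. The symmetric matrix `S H S` is congruent to `H`, so its
quadratic form is positive at `S⁻¹ w` for a positive eigenvector `w` of `H`, and hence `S H S`
has a positive eigenvalue `λ` with eigenvector `e`. Then `v = S e` satisfies `D H v = λ v`.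
Since `P H = H` and `P` commutes with `D`, the range of `D H` lies in the fixed space of `P`,
so `P v = v` and `(D H + P) v = (λ + 1) v`.
-/

open Matrix
open scoped ComplexOrder

namespace Matrix

variable {n : Type*} [Fintype n]

theorem IsHermitian.exists_eigenvalues_pos_of_re_dotProduct_mulVec_pos [DecidableEq n]
    {𝕜 : Type*} [RCLike 𝕜] {M : Matrix n n 𝕜} (hM : M.IsHermitian) {x : n → 𝕜}
    (hx : 0 < RCLike.re (star x ⬝ᵥ M *ᵥ x)) : ∃ i, 0 < hM.eigenvalues i := by
  by_contra! hle
  have hneg : (-M).PosSemidef := hM.neg.posSemidef_iff_eigenvalues_nonneg.mpr fun i => by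
    obtain ⟨j, hj⟩ : hM.neg.eigenvalues i ∈ Set.range (-hM.eigenvalues) := by
      simpa [← spectrum.neg_eq, hM.spectrum_real_eq_range_eigenvalues, Set.neg_range]
        using hM.neg.eigenvalues_mem_spectrum_real i
    simpa [← hj] using hle j
  have := hneg.re_dotProduct_nonneg x
  simp only [neg_mulVec, dotProduct_neg, map_neg] at this
  linarith

theorem exists_pos_eigenvector_of_dotProduct_mulVec_pos [DecidableEq n] {M : Matrix n n ℝ}
    (hM : M.IsSymm) {x : n → ℝ} (hx : 0 < x ⬝ᵥ M *ᵥ x) :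
    ∃ t : ℝ, 0 < t ∧ ∃ e : n → ℝ, e ≠ 0 ∧ M *ᵥ e = t • e := by
  have hM' : M.IsHermitian := by rwa [IsHermitian, conjTranspose_eq_transpose_of_trivial]
  obtain ⟨i, hi⟩ := hM'.exists_eigenvalues_pos_of_re_dotProduct_mulVec_pos (x := x) (by simpa)
  exact ⟨_, hi, _, (WithLp.ofLp_eq_zero 2).not.mpr (hM'.eigenvectorBasis.orthonormal.ne_zero i),
    hM'.mulVec_eigenvectorBasis i⟩

theorem exists_pos_eigenvector_diagonal_mul [DecidableEq n] {d : n → ℝ} (hd : ∀ i, 0 < d i)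
    {H : Matrix n n ℝ} (hH : H.IsSymm)
    (hpos : ∃ μ : ℝ, 0 < μ ∧ ∃ w : n → ℝ, w ≠ 0 ∧ H *ᵥ w = μ • w) :
    ∃ t : ℝ, 0 < t ∧ ∃ v : n → ℝ, v ≠ 0 ∧ (diagonal d * H) *ᵥ v = t • v := by
  obtain ⟨μ, hμ, w, hw, hHw⟩ := hpos
  set s : n → ℝ := fun i => √(d i)
  have hs : ∀ i, s i ≠ 0 := fun i => (Real.sqrt_pos.mpr (hd i)).ne'
  set S := diagonal s
  have hSS : S * S = diagonal d := by
    rw [diagonal_mul_diagonal]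
    exact congrArg diagonal (funext fun i => Real.mul_self_sqrt (hd i).le)
  have hSHS : (S * H * S).IsSymm := by
    simp only [IsSymm, transpose_mul, S, diagonal_transpose, hH.eq, mul_assoc]
  set y : n → ℝ := fun i => w i / s i
  have hSy : S *ᵥ y = w :=
    funext fun i => by simp [S, y, mulVec_diagonal, mul_div_cancel₀ _ (hs i)]
  have hquad : 0 < y ⬝ᵥ (S * H * S) *ᵥ y := by
    have : y ⬝ᵥ (S * H * S) *ᵥ y = μ * (w ⬝ᵥ w) := by
      rw [← mulVec_mulVec, ← mulVec_mulVec, hSy, hHw, dotProduct_mulVec, ← mulVec_transpose,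
        diagonal_transpose, hSy, dotProduct_smul, smul_eq_mul]
    rw [this]
    exact mul_pos hμ (dotProduct_self_star_pos_iff.mpr hw)
  obtain ⟨t, ht, e, he, hSHSe⟩ := exists_pos_eigenvector_of_dotProduct_mulVec_pos hSHS hquad
  refine ⟨t, ht, S *ᵥ e, ?_, ?_⟩
  · intro h
    exact he (funext fun i => by simpa [S, mulVec_diagonal, hs i] using congrFun h i)
  · rw [mulVec_mulVec, ← hSS, show S * S * H * S = S * (S * H * S) by noncomm_ring,
      ← mulVec_mulVec, hSHSe, mulVec_smul]

theorem mulVec_eq_self_of_mul_eq_of_mulVec_eq_smul {K : Type*} [Field K] {P A : Matrix n n K}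
    (hPA : P * A = A) {t : K} (ht : t ≠ 0) {v : n → K} (hv : A *ᵥ v = t • v) :
    P *ᵥ v = v := by
  have : t • P *ᵥ v = t • v := by
    rw [← mulVec_smul, ← hv, mulVec_mulVec, hPA]
  exact smul_right_injective _ ht this

end Matrix

theorem stmt_13_general (N : ℕ)
    (P H : Matrix (Fin N) (Fin N) ℝ) (dv : Fin N → ℝ)
    (hP2 : P * P = P)
    (hdv : ∀ i, 0 < dv i)
    (hcomm : Matrix.diagonal dv * P = P * Matrix.diagonal dv)
    (hHsym : H.IsSymm) (hPHP : P * H * P = H)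
    (hpos : ∃ μ : ℝ, 0 < μ ∧ ∃ w : Fin N → ℝ, w ≠ 0 ∧ H.mulVec w = μ • w) :
    ∃ lam : ℝ, 1 < lam ∧ ∃ v : Fin N → ℝ, v ≠ 0 ∧
      (Matrix.diagonal dv * H + P).mulVec v = lam • v := by
  obtain ⟨t, ht, v, hv, hDHv⟩ := exists_pos_eigenvector_diagonal_mul hdv hHsym hpos
  have hPH : P * H = H := by
    rw [← hPHP, ← mul_assoc, ← mul_assoc, hP2]
  have hPDH : P * (diagonal dv * H) = diagonal dv * H := by
    rw [← mul_assoc, ← hcomm, mul_assoc, hPH]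
  have hPv : P *ᵥ v = v := mulVec_eq_self_of_mul_eq_of_mulVec_eq_smul hPDH ht.ne' hDHv
  exact ⟨t + 1, by linarith, v, hv, by rw [add_mulVec, hDHv, hPv, add_smul, one_smul]⟩

/-- instability transfer lemma. If `P` is a symmetric projection, `D` a
positive diagonal matrix commuting with `P`, and `H` symmetric with `P H P = H` and a
strictly positive eigenvalue, then `D H + P` has a real eigenvalue strictly greater
than `1` (in particular an eigenvalue of modulus `> 1`). -/
theorem stmt_13 (N : ℕ) (hN : 1 ≤ N)
    (P H : Matrix (Fin N) (Fin N) ℝ) (dv : Fin N → ℝ)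
    (hPsym : P.IsSymm) (hP2 : P * P = P)
    (hdv : ∀ i, 0 < dv i)
    (hcomm : Matrix.diagonal dv * P = P * Matrix.diagonal dv)
    (hHsym : H.IsSymm) (hPHP : P * H * P = H)
    (hpos : ∃ μ : ℝ, 0 < μ ∧ ∃ w : Fin N → ℝ, w ≠ 0 ∧ H.mulVec w = μ • w) :
    ∃ lam : ℝ, 1 < lam ∧ ∃ v : Fin N → ℝ, v ≠ 0 ∧
      (Matrix.diagonal dv * H + P).mulVec v = lam • v :=
  stmt_13_general N P H dv hP2 hdv hcomm hHsym hPHP hpos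
end

section
/- Let d = 2, let G = (V,E) be a strongly connected directed graph on vertices {1,…,n}, and let A = [a_ij] be a strictly diagonally dominant weight matrix for G. Suppose x = (x_1,…,x_n) is a fixed point of the consensus map f_A such that ⟨x_i, x_j⟩ > 0 for all i, j with a_ij > 0. Then every complex eigenvalue of the projected Jacobian J(x) has modulus at most 1, and 1 is an eigenvalue of J(x); in particular x is not an unstable fixed point. -/
open scoped BigOperators InnerProductSpace

noncomputable section

/-!
In the plane the tangent projection of a unit vector `u` has rank one, `P_u = (rot u)(rot u)ᵀ`
with `rot u` the quarter turn of `u`. Hence at a fixed point `J(x) = N W Nᵀ`, where the columns of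
the isometry `N` are the `rot x_i` and `W = [‖Σ_k a_ik x_k‖⁻¹ a_ij ⟨x_i, x_j⟩]`. The fixed-point
equation and the positivity of `⟨x_i, x_j⟩` on the edges make `W` row stochastic. So every nonzero
eigenvalue of `J(x)` is an eigenvalue of `W`, of modulus at most `1` by Gershgorin's theorem, and
`N 𝟙` is fixed by `J(x)`.
-/

open Matrix

namespace Matrix

theorem norm_le_one_of_hasEigenvalue_of_mem_rowStochastic {ι : Type*} [Fintype ι]
    [DecidableEq ι] {M : Matrix ι ι ℝ} (hM : M ∈ rowStochastic ℝ ι) {μ : ℂ}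
    (hμ : Module.End.HasEigenvalue (toLin' (M.map Complex.ofReal)) μ) : ‖μ‖ ≤ 1 := by
  obtain ⟨k, hk⟩ := eigenvalue_mem_ball hμ
  rw [mem_closedBall_iff_norm] at hk
  simp only [map_apply, Complex.norm_real, Real.norm_of_nonneg (nonneg_of_mem_rowStochastic hM)]
    at hk
  calc ‖μ‖ ≤ ‖((M k k : ℝ) : ℂ)‖ + ‖μ - M k k‖ := norm_le_insert' _ _
    _ ≤ M k k + ∑ j ∈ Finset.univ.erase k, M k j := by
      rw [Complex.norm_real, Real.norm_of_nonneg (nonneg_of_mem_rowStochastic hM)]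
      gcongr
    _ = 1 := by
      rw [Finset.add_sum_erase _ _ (Finset.mem_univ k), sum_row_of_mem_rowStochastic hM]

section Compression

variable {K ι κ : Type*} [Field K] [Fintype ι] [DecidableEq ι] [Fintype κ]
  {N : Matrix κ ι K}

theorem mul_mul_transpose_mulVec_mulVec (hN : Nᵀ * N = 1) (M : Matrix ι ι K) (u : ι → K) :
    (N * M * Nᵀ) *ᵥ (N *ᵥ u) = N *ᵥ (M *ᵥ u) := by
  rw [mulVec_mulVec, Matrix.mul_assoc, Matrix.mul_assoc, hN, Matrix.mul_one, mulVec_mulVec]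

theorem mulVec_ne_zero_of_transpose_mul_self_eq_one (hN : Nᵀ * N = 1) {u : ι → K} (hu : u ≠ 0) :
    N *ᵥ u ≠ 0 := by
  intro h
  apply hu
  rw [← one_mulVec u, ← hN, ← mulVec_mulVec, h, mulVec_zero]

theorem hasEigenvalue_of_mul_mul_transpose_mulVec (hN : Nᵀ * N = 1) {M : Matrix ι ι K}
    {μ : K} (hμ : μ ≠ 0) {v : κ → K} (hv : v ≠ 0) (h : (N * M * Nᵀ) *ᵥ v = μ • v) :
    Module.End.HasEigenvalue (toLin' M) μ := by
  have heig : M *ᵥ (Nᵀ *ᵥ v) = μ • (Nᵀ *ᵥ v) := by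
    calc M *ᵥ (Nᵀ *ᵥ v) = Nᵀ *ᵥ ((N * M * Nᵀ) *ᵥ v) := by
          simp only [mulVec_mulVec, ← Matrix.mul_assoc, hN, Matrix.one_mul]
      _ = μ • (Nᵀ *ᵥ v) := by rw [h, mulVec_smul]
  have hw : Nᵀ *ᵥ v ≠ 0 := by
    intro hw
    apply hv
    have : μ • v = 0 := by rw [← h, ← mulVec_mulVec, hw, mulVec_zero]
    exact (smul_eq_zero.mp this).resolve_left hμ
  exact Module.End.hasEigenvalue_of_hasEigenvector
    ⟨Module.End.mem_eigenspace_iff.mpr (by rwa [toLin'_apply]), hw⟩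

end Compression

end Matrix

def rot (u : EuclideanSpace ℝ (Fin 2)) : Fin 2 → ℝ := ![-u 1, u 0]

theorem sum_rot_mul_rot (u v : EuclideanSpace ℝ (Fin 2)) :
    ∑ a, rot u a * rot v a = ⟪u, v⟫_ℝ := by
  simp [rot, PiLp.inner_apply, Fin.sum_univ_two]
  ring

theorem sub_mul_eq_rot_mul_rot {u : EuclideanSpace ℝ (Fin 2)} (hu : ‖u‖ = 1) (a c : Fin 2) :
    (if a = c then (1 : ℝ) else 0) - u a * u c = rot u a * rot u c := by
  have hsq : u 0 * u 0 + u 1 * u 1 = 1 := by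
    have h := sum_rot_mul_rot u u
    rw [real_inner_self_eq_norm_sq, hu] at h
    simp only [rot, Fin.sum_univ_two, Matrix.cons_val_zero, Matrix.cons_val_one] at h
    linarith
  fin_cases a <;> fin_cases c <;> simp [rot] <;> linarith

def tangentFrame {n : ℕ} (x : Fin n → EuclideanSpace ℝ (Fin 2)) :
    Matrix (Fin n × Fin 2) (Fin n) ℝ :=
  Matrix.of fun p j => if p.1 = j then rot (x j) p.2 else 0

section TangentFrame

variable {n : ℕ} {x : Fin n → EuclideanSpace ℝ (Fin 2)}

theorem tangentFrame_transpose_mul_self (hx : ∀ i, ‖x i‖ = 1) :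
    (tangentFrame x)ᵀ * tangentFrame x = 1 := by
  ext i j
  simp only [mul_apply, transpose_apply, tangentFrame, of_apply, Fintype.sum_prod_type, ite_mul,
    zero_mul, mul_ite, mul_zero, Finset.sum_ite_irrel, Finset.sum_const_zero, Finset.sum_ite_eq',
    Finset.mem_univ, if_true, sum_rot_mul_rot, one_apply]
  rcases eq_or_ne i j with rfl | hij
  · simp [hx]
  · simp [hij, hij.symm]

theorem projBlock_eq_tangentFrame_mul_transpose (hx : ∀ i, ‖x i‖ = 1) :
    projBlock x = tangentFrame x * (tangentFrame x)ᵀ := by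
  ext ⟨i, a⟩ ⟨k, c⟩
  simp only [projBlock, mul_apply, transpose_apply, tangentFrame, of_apply, ite_mul, zero_mul,
    mul_ite, mul_zero, Finset.sum_ite_eq, Finset.mem_univ, if_true, sub_mul_eq_rot_mul_rot (hx _)]
  split_ifs with hik
  · rw [hik]
  · rfl

theorem tangentFrame_transpose_mul_kronecker_mul (B : Matrix (Fin n) (Fin n) ℝ) :
    (tangentFrame x)ᵀ * kroneckerMap (· * ·) B (1 : Matrix (Fin 2) (Fin 2) ℝ) * tangentFrame x
      = Matrix.of fun i j => B i j * ⟪x i, x j⟫_ℝ := by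
  ext i j
  simp only [mul_apply, transpose_apply, tangentFrame, of_apply, Fintype.sum_prod_type, ite_mul,
    zero_mul, mul_ite, mul_zero, Finset.sum_ite_irrel, Finset.sum_const_zero, Finset.sum_ite_eq',
    Finset.mem_univ, if_true, kroneckerMap_apply, one_apply]
  rw [← sum_rot_mul_rot, Finset.mul_sum]
  exact Finset.sum_congr rfl fun a _ => by ring

end TangentFrame

def tangentWeights {n d : ℕ} (A : Matrix (Fin n) (Fin n) ℝ)
    (x : Fin n → EuclideanSpace ℝ (Fin d)) : Matrix (Fin n) (Fin n) ℝ :=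
  Matrix.of fun i j => (Dmat A x * A) i j * ⟪x i, x j⟫_ℝ

/-- The row sums are `⟨x_i, f_i(x)⟩ = 1`. -/
theorem tangentWeights_mem_rowStochastic {n d : ℕ} {A : Matrix (Fin n) (Fin n) ℝ}
    {x : Fin n → EuclideanSpace ℝ (Fin d)} (hApos : ∀ i j, 0 ≤ A i j) (hx : ∀ i, ‖x i‖ = 1)
    (hfix : ∀ i, consMap A x i = x i) (hinner : ∀ i j, 0 < A i j → 0 < ⟪x i, x j⟫_ℝ) :
    tangentWeights A x ∈ rowStochastic ℝ (Fin n) := by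
  have hentry : ∀ i j, tangentWeights A x i j = ‖consSum A x i‖⁻¹ * A i j * ⟪x i, x j⟫_ℝ :=
    fun i j => by simp [tangentWeights, Dmat, diagonal_mul]
  refine mem_rowStochastic_iff_sum.mpr ⟨fun i j => ?_, fun i => ?_⟩
  · rw [hentry]
    rcases (hApos i j).eq_or_lt with h | h
    · simp [← h]
    · have := hinner i j h
      positivity
  · calc ∑ j, tangentWeights A x i j = ⟪x i, consMap A x i⟫_ℝ := by
          simp only [hentry, consMap, consSum, real_inner_smul_right, inner_sum, Finset.mul_sum]
          exact Finset.sum_congr rfl fun j _ => by ring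
      _ = 1 := by rw [hfix, real_inner_self_eq_norm_sq, hx, one_pow]

theorem Jmat_eq_tangentFrame_mul_tangentWeights_mul {n : ℕ} {A : Matrix (Fin n) (Fin n) ℝ}
    {x : Fin n → EuclideanSpace ℝ (Fin 2)} (hx : ∀ i, ‖x i‖ = 1)
    (hfix : ∀ i, consMap A x i = x i) :
    Jmat A x = tangentFrame x * tangentWeights A x * (tangentFrame x)ᵀ := by
  rw [tangentWeights, ← tangentFrame_transpose_mul_kronecker_mul, Jmat, funext hfix,
    projBlock_eq_tangentFrame_mul_transpose hx]
  simp only [Matrix.mul_assoc]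

theorem stmt_16_general (n : ℕ) (hn : 1 ≤ n)
    (A : Matrix (Fin n) (Fin n) ℝ)
    (hApos : ∀ i j, 0 ≤ A i j)
    (x : Fin n → EuclideanSpace ℝ (Fin 2)) (hx : ∀ i, ‖x i‖ = 1)
    (hfix : ∀ i, consMap A x i = x i)
    (hinner : ∀ i j, 0 < A i j → 0 < ⟪x i, x j⟫_ℝ) :
    (∀ (μ : ℂ) (v : Fin n × Fin 2 → ℂ), v ≠ 0 →
        ((Jmat A x).map Complex.ofReal).mulVec v = μ • v → ‖μ‖ ≤ 1) ∧
    ∃ v : Fin n × Fin 2 → ℂ, v ≠ 0 ∧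
        ((Jmat A x).map Complex.ofReal).mulVec v = v := by
  set N := (tangentFrame x).map Complex.ofReal
  set C := tangentWeights A x
  have hC : C ∈ rowStochastic ℝ (Fin n) := tangentWeights_mem_rowStochastic hApos hx hfix hinner
  have hN : Nᵀ * N = 1 := by
    change (tangentFrame x)ᵀ.map Complex.ofRealHom * (tangentFrame x).map Complex.ofRealHom = 1
    rw [← Matrix.map_mul, tangentFrame_transpose_mul_self hx,
      Matrix.map_one _ (map_zero _) (map_one _)]
  have hJ : (Jmat A x).map Complex.ofReal = N * C.map Complex.ofReal * Nᵀ := by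
    change _ = (tangentFrame x).map Complex.ofRealHom * C.map Complex.ofRealHom *
      (tangentFrame x)ᵀ.map Complex.ofRealHom
    rw [← Matrix.map_mul, ← Matrix.map_mul, Jmat_eq_tangentFrame_mul_tangentWeights_mul hx hfix]
    rfl
  have hC1 : C.map Complex.ofReal *ᵥ 1 = 1 := by
    ext i
    simpa [mulVec, dotProduct] using congrArg Complex.ofReal (sum_row_of_mem_rowStochastic hC i)
  have : NeZero n := ⟨by omega⟩
  refine ⟨fun μ v hv hμv => ?_, N *ᵥ 1,
    mulVec_ne_zero_of_transpose_mul_self_eq_one hN one_ne_zero, ?_⟩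
  · rcases eq_or_ne μ 0 with rfl | hμ
    · simp
    rw [hJ] at hμv
    exact norm_le_one_of_hasEigenvalue_of_mem_rowStochastic hC
      (hasEigenvalue_of_mul_mul_transpose_mulVec hN hμ hv hμv)
  · rw [hJ, mul_mul_transpose_mulVec_mulVec hN, hC1]

/-- for `d = 2`, a strongly connected directed graph and a strictly
diagonally dominant weight matrix, any fixed point `x` with `⟨x_i, x_j⟩ > 0` whenever
`a_ij > 0` has a projected Jacobian all of whose complex eigenvalues have modulus at
most `1`, with `1` an eigenvalue; in particular `x` is not unstable. -/
theorem stmt_16 (n : ℕ) (hn : 1 ≤ n)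
    (E : Fin n → Fin n → Prop)
    (hconn : ∀ i j, Relation.ReflTransGen E i j)
    (A : Matrix (Fin n) (Fin n) ℝ)
    (hApos : ∀ i j, 0 ≤ A i j)
    (hAE : ∀ i j, i ≠ j → (0 < A i j ↔ E i j))
    (hdd : ∀ i, ∑ j ∈ Finset.univ.erase i, A i j < A i i)
    (x : Fin n → EuclideanSpace ℝ (Fin 2)) (hx : ∀ i, ‖x i‖ = 1)
    (hfix : ∀ i, consMap A x i = x i)
    (hinner : ∀ i j, 0 < A i j → 0 < ⟪x i, x j⟫_ℝ) :
    (∀ (μ : ℂ) (v : Fin n × Fin 2 → ℂ), v ≠ 0 →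
        ((Jmat A x).map Complex.ofReal).mulVec v = μ • v → ‖μ‖ ≤ 1) ∧
    ∃ v : Fin n × Fin 2 → ℂ, v ≠ 0 ∧
        ((Jmat A x).map Complex.ofReal).mulVec v = v :=
  stmt_16_general n hn A hApos x hx hfix hinner

end
end

section
/- Let d = 2 and let G = (V,E) be a strongly connected directed graph on vertices {1,…,n}. Let P = {(i,i) : 1 ≤ i ≤ n} ∪ E be the admissible index set, and identify each function a : P → ℝ with the matrix A = [a_ij] given by a_ij = a(i,j) for (i,j) ∈ P and a_ij = 0 otherwise. Then the set of functions a : P → ℝ such that (i) a(p) > 0 for all p ∈ P, (ii) A is strictly diagonally dominant, and (iii) there exists a fixed point x of the consensus map f_A that is not an antipodal-consensus configuration, has Lebesgue measure zero in ℝ^P ≅ ℝ^{n + |E|}. -/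
open scoped BigOperators

noncomputable section

/-- The weight matrix associated with a function `a` on the admissible index set
`P = {(i,i)} ∪ E`: entries off `P` are zero. -/
def wmOf {n : ℕ} (E : Fin n → Fin n → Prop) [DecidableRel E]
    (a : {p : Fin n × Fin n // p.1 = p.2 ∨ E p.1 p.2} → ℝ) : Matrix (Fin n) (Fin n) ℝ :=
  Matrix.of fun i j => if h : i = j ∨ E i j then a ⟨(i, j), h⟩ else 0

/-!
Write `x i = (cos θ i, sin θ i)`; being a fixed point means `∑ j, a i j * sin (θ j - θ i) = 0`
for every `i`. Call `i` and `j` aligned when `x j = ± x i`. If `x` is not antipodal there are at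
least two alignment classes, and strong connectivity gives every class a vertex `i` with an edge
`(i, out i)` leaving the class, so `sin (θ (out i) - θ i) ≠ 0` and row `i` of the fixed-point
equation can be solved for `a i (out i)`. Store the angle of each class, measured from a base
class, in the slot `(i, out i)` of its chosen vertex: then `a` is the image, under the map
`solveBalance` that does the solving, of a weight vector whose slot for the base class is `0`.
That map is differentiable where the solved-for coefficients do not vanish, so it sends this null
hyperplane to a null set, and the discrete data involved range over a finite set.
-/

open Real MeasureTheory Finset

theorem Relation.ReflTransGen.exists_edge_leaving_class {α : Type*} (s : Setoid α)
    {E : α → α → Prop} {u v : α} (huv : Relation.ReflTransGen E u v) (hne : ¬ u ≈ v) :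
    ∃ k, k ≈ u ∧ ∃ j, E k j ∧ ¬ k ≈ j := by
  induction huv using Relation.ReflTransGen.head_induction_on with
  | refl => exact absurd (Setoid.refl v) hne
  | @head p q hpq _ ih =>
    by_cases hp : p ≈ q
    · obtain ⟨k, hk, hrest⟩ := ih fun hqv => hne (Setoid.trans hp hqv)
      exact ⟨k, Setoid.trans hk (Setoid.symm hp), hrest⟩
    · exact ⟨p, Setoid.refl p, q, hpq, hp⟩

theorem Setoid.exists_classwise_choice_mem {α : Type*} (s : Setoid α) {S : Set α}
    (hS : ∀ u, ∃ k ∈ S, k ≈ u) :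
    ∃ r : α → α, (∀ u, r u ∈ S) ∧ (∀ u, r u ≈ u) ∧ ∀ u v, u ≈ v → r u = r v := by
  choose k hkS hk using hS
  exact ⟨fun u => k (⟦u⟧ : Quotient s).out, fun u => hkS _,
    fun u => Setoid.trans (hk _) (Quotient.mk_out u),
    fun u v huv => by simp only [Quotient.sound huv]⟩

def alignedSetoid {ι : Type*} (θ : ι → ℝ) : Setoid ι where
  r i j := sin (θ j - θ i) = 0
  iseqv :=
    { refl := fun i => by simp
      symm := fun {i j} h => by rw [← neg_sub, sin_neg, h, neg_zero]
      trans := fun {i j k} hij hjk => by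
        rw [← sub_add_sub_cancel, sin_add, hij, hjk]; ring }

namespace Real

theorem cos_eq_sign_of_sin_eq_zero {t : ℝ} (h : sin t = 0) : cos t = SignType.sign (cos t) := by
  rcases sin_eq_zero_iff_cos_eq.mp h with h1 | h1 <;> simp [h1]

theorem sin_sub_eq_of_sin_sub_eq_zero {a a' b b' : ℝ} (ha : sin (a - a') = 0)
    (hb : sin (b - b') = 0) :
    sin (b - a) = cos (a - a') * cos (b - b') * sin (b' - a') := by
  have : b - a = (b' - a') + (b - b') - (a - a') := by ring
  rw [this, sin_sub, sin_add, cos_add, ha, hb]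
  ring

end Real

def unitVec (t : ℝ) : EuclideanSpace ℝ (Fin 2) := !₂[cos t, sin t]

theorem norm_unitVec (t : ℝ) : ‖unitVec t‖ = 1 := by
  simp [unitVec, EuclideanSpace.norm_eq, Fin.sum_univ_two]

theorem exists_eq_unitVec {u : EuclideanSpace ℝ (Fin 2)} (hu : ‖u‖ = 1) : ∃ t, u = unitVec t := by
  have hsq : u 0 ^ 2 + u 1 ^ 2 = 1 := by
    simpa [EuclideanSpace.norm_eq, Fin.sum_univ_two, Real.sqrt_eq_one] using hu
  set z : ℂ := ⟨u 0, u 1⟩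
  have hz : ‖z‖ = 1 := by
    rw [Complex.norm_def, Complex.normSq_mk, ← sq, ← sq, hsq, Real.sqrt_one]
  have hz0 : z ≠ 0 := norm_ne_zero_iff.mp (by rw [hz]; exact one_ne_zero)
  refine ⟨z.arg, ?_⟩
  ext k
  fin_cases k
  · simp [unitVec, Complex.cos_arg hz0, hz, z]
  · simp [unitVec, Complex.sin_arg, hz, z]

theorem unitVec_eq_cos_smul {t t' : ℝ} (h : sin (t - t') = 0) :
    unitVec t = cos (t - t') • unitVec t' := by
  ext k
  fin_cases k
  · simpa [unitVec, h] using cos_add (t - t') t'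
  · simpa [unitVec, h, mul_comm] using sin_add (t - t') t'

theorem sum_mul_sin_sub_eq_zero {ι : Type*} [Fintype ι] (w θ : ι → ℝ) (i : ι)
    (h : ‖∑ j, w j • unitVec (θ j)‖⁻¹ • ∑ j, w j • unitVec (θ j) = unitVec (θ i)) :
    ∑ j, w j * sin (θ j - θ i) = 0 := by
  set S := ∑ j, w j • unitVec (θ j)
  have hS : S = ‖S‖ • unitVec (θ i) := by
    rw [← h, smul_smul]
    rcases eq_or_ne S 0 with h0 | h0
    · simp [h0]
    · rw [mul_inv_cancel₀ (norm_ne_zero_iff.mpr h0), one_smul]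
  have h0 : ∑ j, w j * cos (θ j) = ‖S‖ * cos (θ i) := by
    simpa [S, unitVec] using congrArg (· 0) hS
  have h1 : ∑ j, w j * sin (θ j) = ‖S‖ * sin (θ i) := by
    simpa [S, unitVec] using congrArg (· 1) hS
  calc ∑ j, w j * sin (θ j - θ i)
      = (∑ j, w j * sin (θ j)) * cos (θ i) - (∑ j, w j * cos (θ j)) * sin (θ i) := by
        simp only [sin_sub, Finset.sum_mul, ← Finset.sum_sub_distrib]
        exact Finset.sum_congr rfl fun j _ => by ring
    _ = 0 := by rw [h0, h1]; ring

namespace Consensus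

variable {n : ℕ} (E : Fin n → Fin n → Prop) [DecidableRel E]

abbrev Slots : Type := {p : Fin n × Fin n // p.1 = p.2 ∨ E p.1 p.2}

abbrev Weights : Type := Slots E → ℝ

variable {E}

theorem wmOf_apply (a : Weights E) (i j : Fin n) :
    wmOf E a i j = if h : i = j ∨ E i j then a ⟨(i, j), h⟩ else 0 :=
  rfl

theorem wmOf_of_mem (a : Weights E) {i j : Fin n} (h : i = j ∨ E i j) :
    wmOf E a i j = a ⟨(i, j), h⟩ :=
  dif_pos h

@[fun_prop]
theorem differentiable_wmOf_apply (i j : Fin n) :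
    Differentiable ℝ fun a : Weights E => wmOf E a i j := by
  rw [funext fun a => wmOf_apply a i j]
  split_ifs <;> fun_prop

section Chart

variable (E) (r out : Fin n → Fin n) (s : Fin n → SignType) (C : Finset (Fin n))

/-- `r` picks a vertex of each alignment class, and the slot `(r v, out (r v))` of `a` is read as
the angle of the class of `v`. -/
def classAngle (a : Weights E) (v : Fin n) : ℝ := wmOf E a (r v) (out (r v))

/-- With `s v` the sign for which `x v = s v • x (r v)`, this recovers `sin (θ j - θ i)`. -/
def sineCoeff (a : Weights E) (i j : Fin n) : ℝ :=
  s i * s j * sin (classAngle E r out a j - classAngle E r out a i)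

def solveBalance (b : Weights E) : Weights E := fun q =>
  if q.1.1 ∈ C ∧ q.1.2 = out q.1.1 then
    -(∑ j ∈ univ.erase (out q.1.1), wmOf E b q.1.1 j * sineCoeff E r out s b q.1.1 j) /
      sineCoeff E r out s b q.1.1 (out q.1.1)
  else b q

def coverPiece (q : Slots E) : Set (Weights E) :=
  solveBalance E r out s C '' ({b | b q = 0} ∩ {b | ∀ i ∈ C, sineCoeff E r out s b i (out i) ≠ 0})

@[fun_prop]
theorem differentiable_sineCoeff (i j : Fin n) :
    Differentiable ℝ fun a : Weights E => sineCoeff E r out s a i j := by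
  unfold sineCoeff classAngle
  fun_prop

theorem differentiableAt_solveBalance {b : Weights E}
    (hb : ∀ i ∈ C, sineCoeff E r out s b i (out i) ≠ 0) :
    DifferentiableAt ℝ (solveBalance E r out s C) b := by
  refine differentiableAt_pi.mpr fun q => ?_
  unfold solveBalance
  split_ifs with hq
  · fun_prop (disch := exact hb _ hq.1)
  · fun_prop

theorem volume_coverPiece (q : Slots E) :
    volume (coverPiece E r out s C q) = 0 :=
  addHaar_image_eq_zero_of_differentiableOn_of_addHaar_eq_zero _
    (fun _ hb => (differentiableAt_solveBalance E r out s C hb.2).differentiableWithinAt)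
    (measure_mono_null Set.inter_subset_left (Measure.pi_hyperplane _ q 0))

variable {E r out s C}

theorem solveBalance_eq {a b : Weights E}
    (hagree : ∀ q, ¬ (q.1.1 ∈ C ∧ q.1.2 = out q.1.1) → b q = a q)
    (hbal : ∀ i ∈ C, ∑ j, wmOf E a i j * sineCoeff E r out s b i j = 0)
    (hne : ∀ i ∈ C, sineCoeff E r out s b i (out i) ≠ 0) :
    solveBalance E r out s C b = a := by
  funext ⟨⟨i, j⟩, hij⟩
  simp only [solveBalance]
  split_ifs with hq
  · obtain ⟨hi, rfl : j = out i⟩ := hq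
    have hrow : ∀ k ∈ univ.erase (out i), wmOf E b i k = wmOf E a i k := by
      intro k hk
      rw [wmOf_apply, wmOf_apply]
      split_ifs
      · exact hagree _ fun h => ne_of_mem_erase hk h.2
      · rfl
    have hentry : a ⟨(i, out i), hij⟩ = wmOf E a i (out i) := (wmOf_of_mem a hij).symm
    have hsplit := add_sum_erase univ (fun k => wmOf E a i k * sineCoeff E r out s b i k)
      (mem_univ (out i))
    rw [sum_congr rfl fun k hk => by rw [hrow k hk], hentry, div_eq_iff (hne i hi)]
    linarith [hbal i hi]
  · exact hagree _ hq

end Chart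

variable (E) in
def cover : Set (Weights E) := ⋃ (r) (out) (s) (C) (q), coverPiece E r out s C q

variable (E) in
theorem volume_cover : volume (cover E) = 0 := by
  simp only [cover, measure_iUnion_null_iff]
  exact volume_coverPiece E

theorem mem_cover (hconn : ∀ i j, Relation.ReflTransGen E i j) {a : Weights E}
    {θ : Fin n → ℝ} (hbal : ∀ i, ∑ j, wmOf E a i j * sin (θ j - θ i) = 0) {i₀ w : Fin n}
    (hw : sin (θ w - θ i₀) ≠ 0) :
    a ∈ cover E := by
  classical
  let := alignedSetoid θ
  set C := univ.filter fun i => ∃ j, E i j ∧ ¬ i ≈ j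
  have : Nonempty (Fin n) := ⟨w⟩
  choose! out hout using fun i (hi : i ∈ C) => (mem_filter.mp hi).2
  have hmeet : ∀ u, ∃ k ∈ C, k ≈ u := by
    intro u
    obtain ⟨v, hv⟩ : ∃ v, ¬ u ≈ v := by
      by_cases hu : u ≈ i₀
      · exact ⟨w, fun huw => hw (Setoid.trans (Setoid.symm hu) huw)⟩
      · exact ⟨i₀, hu⟩
    obtain ⟨k, hk, j, hkj, hne⟩ := (hconn u v).exists_edge_leaving_class _ hv
    exact ⟨k, mem_filter.mpr ⟨mem_univ k, j, hkj, hne⟩, hk⟩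
  obtain ⟨r, hrC, hr, hr_const⟩ := Setoid.exists_classwise_choice_mem _ hmeet
  have hrr : ∀ v, r (r v) = r v := fun v => hr_const _ _ (hr v)
  set b : Weights E := fun q =>
    if q.1.1 ∈ C ∧ q.1.2 = out q.1.1 then θ (r q.1.1) - θ (r i₀) else a q
  set s : Fin n → SignType := fun v => SignType.sign (cos (θ v - θ (r v)))
  have hangle : ∀ v, classAngle E r out b v = θ (r v) - θ (r i₀) := by
    intro v
    rw [classAngle, wmOf_of_mem b (Or.inr (hout _ (hrC v)).1)]
    simp only [b, mem_coe.mp (hrC v), and_self, if_true, hrr]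
  have hcoeff : ∀ i j, sineCoeff E r out s b i j = sin (θ j - θ i) := by
    intro i j
    rw [sineCoeff, hangle, hangle, sub_sub_sub_cancel_right,
      sin_sub_eq_of_sin_sub_eq_zero (hr i) (hr j), cos_eq_sign_of_sin_eq_zero (hr i),
      cos_eq_sign_of_sin_eq_zero (hr j)]
  have hcross : ∀ i ∈ C, sineCoeff E r out s b i (out i) ≠ 0 := fun i hi => by
    rw [hcoeff]
    exact (hout i hi).2
  simp only [cover, Set.mem_iUnion]
  refine ⟨r, out, s, C, ⟨(r i₀, out (r i₀)), Or.inr (hout _ (hrC i₀)).1⟩, b, ⟨?_, hcross⟩,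
    solveBalance_eq (fun q hq => if_neg hq) (fun i _ => by simp only [hcoeff, hbal]) hcross⟩
  show b _ = 0
  simp only [b, mem_coe.mp (hrC i₀), and_self, if_true, hrr, sub_self]

end Consensus

/-- for `d = 2` and a strongly connected directed graph `G = (V, E)`, the
set of weight functions `a : P → ℝ` on the admissible index set `P = {(i,i)} ∪ E` that
are positive, give a strictly diagonally dominant weight matrix, and admit a fixed point
of the consensus map that is not an antipodal-consensus configuration, has Lebesgue
measure zero in `ℝ^P`. -/
theorem stmt_18 (n : ℕ) (hn : 1 ≤ n)
    (E : Fin n → Fin n → Prop) [DecidableRel E]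
    (hconn : ∀ i j, Relation.ReflTransGen E i j) :
    MeasureTheory.volume
      {a : {p : Fin n × Fin n // p.1 = p.2 ∨ E p.1 p.2} → ℝ |
        (∀ p, 0 < a p) ∧
        (∀ i, ∑ j ∈ Finset.univ.erase i, wmOf E a i j < wmOf E a i i) ∧
        ∃ x : Fin n → EuclideanSpace ℝ (Fin 2),
          (∀ i, ‖x i‖ = 1) ∧
          (∀ i, ‖∑ j, wmOf E a i j • x j‖⁻¹ • ∑ j, wmOf E a i j • x j = x i) ∧
          ¬ ∃ (xbar : EuclideanSpace ℝ (Fin 2)) (s : Fin n → ℝ),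
              ‖xbar‖ = 1 ∧ (∀ i, s i = 1 ∨ s i = -1) ∧ ∀ i, x i = s i • xbar} = 0 := by
  refine measure_mono_null ?_ (Consensus.volume_cover E)
  rintro a ⟨-, -, x, hx, hfix, hnot⟩
  choose θ hθ using fun i => exists_eq_unitVec (hx i)
  obtain rfl : x = fun i => unitVec (θ i) := funext hθ
  set i₀ : Fin n := ⟨0, hn⟩
  obtain ⟨w, hw⟩ : ∃ w, sin (θ w - θ i₀) ≠ 0 := by
    by_contra! h
    exact hnot ⟨unitVec (θ i₀), fun i => cos (θ i - θ i₀), norm_unitVec _,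
      fun i => sin_eq_zero_iff_cos_eq.mp (h i), fun i => unitVec_eq_cos_smul (h i)⟩
  exact Consensus.mem_cover hconn (fun i => sum_mul_sin_sub_eq_zero _ θ i (hfix i)) hw
end
end
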